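/- arXiv:1106.1638 — 8 statements merged into one kernel-verified Lean document; each statement's English description precedes it below -/
import Mathlib

section
/- Let (Ω, 𝒜, Q) be a probability space, let k ≥ 2, and let Z₁, …, Z_k be random variables on Ω taking values in [0,1] almost surely, such that for each i the support of the law of Z_i is the whole interval [0,1] (regularity), and such that for all i ≠ j, Q(Z_i ≠ Z_j) > 0. Let w₁, …, w_k be strictly positive weights summing to 1. Then Var(Σ_{i=1}^k w_i Z_i) < max_{1≤i≤k} Var(Z_i). -/
/-!
For weights summing to one, bilinearity of the covariance gives
`Var (∑ wᵢ Zᵢ) = ∑ wᵢ Var Zᵢ - ½ ∑ᵢ ∑ⱼ wᵢ wⱼ Var (Zᵢ - Zⱼ)`.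
Regularity makes `Var (Zᵢ - Zⱼ) > 0` for `i ≠ j`: if `Zᵢ - Zⱼ = c` almost surely, then since
both variables are nonnegative and have `0` in the support of their law, `c ≤ 0` and `-c ≤ 0`,
so `Zᵢ = Zⱼ` almost surely. Hence the pooled variance is strictly below the weighted mean of
the component variances, which is at most their maximum.
-/

open MeasureTheory ProbabilityTheory

/-- The (topological) support of a Borel measure on `ℝ`: the set of points all of whose
open neighbourhoods have positive measure. -/
def msupport (μ : Measure ℝ) : Set ℝ :=
  {x | ∀ U : Set ℝ, IsOpen U → x ∈ U → 0 < μ U}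

section

variable {Ω ι : Type*} [MeasurableSpace Ω] {μ : Measure Ω}

lemma le_of_mem_msupport_map {X : Ω → ℝ} (hX : AEMeasurable X μ) {a x : ℝ}
    (hx : x ∈ msupport (μ.map X)) (haX : ∀ᵐ ω ∂μ, a ≤ X ω) : a ≤ x := by
  by_contra! hxa
  have hpos := hx (Set.Iio a) isOpen_Iio hxa
  rw [Measure.map_apply_of_aemeasurable hX measurableSet_Iio] at hpos
  refine hpos.ne' (measure_eq_zero_iff_ae_notMem.2 ?_)
  filter_upwards [haX] with ω hω using not_lt.2 hω

lemma variance_sub_pos_of_mem_msupport_map [IsFiniteMeasure μ] {X Y : Ω → ℝ}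
    (hX : MemLp X 2 μ) (hY : MemLp Y 2 μ) {x : ℝ}
    (hxX : x ∈ msupport (μ.map X)) (hxY : x ∈ msupport (μ.map Y))
    (hXx : ∀ᵐ ω ∂μ, x ≤ X ω) (hYx : ∀ᵐ ω ∂μ, x ≤ Y ω) (hXY : 0 < μ {ω | X ω ≠ Y ω}) :
    0 < Var[fun ω ↦ X ω - Y ω; μ] := by
  refine (variance_nonneg _ _).lt_of_ne' fun hvar ↦ hXY.ne' ?_
  set c := μ[fun ω ↦ X ω - Y ω]
  have hc := ae_eq_integral_of_variance_eq_zero (hX.sub hY) hvar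
  have hc_nonpos : c ≤ 0 := by
    have := le_of_mem_msupport_map hX.aemeasurable hxX (a := x + c) (by
      filter_upwards [hc, hYx] with ω hω hYω
      simp only [Pi.sub_apply] at hω
      linarith)
    linarith
  have hc_nonneg : 0 ≤ c := by
    have := le_of_mem_msupport_map hY.aemeasurable hxY (a := x - c) (by
      filter_upwards [hc, hXx] with ω hω hXω
      simp only [Pi.sub_apply] at hω
      linarith)
    linarith
  refine measure_eq_zero_iff_ae_notMem.2 ?_
  filter_upwards [hc] with ω hω
  simp only [Pi.sub_apply] at hω
  simp only [not_not]
  linarith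

lemma variance_convex_combination [IsFiniteMeasure μ] [Fintype ι] {X : ι → Ω → ℝ}
    (hX : ∀ i, MemLp (X i) 2 μ) {w : ι → ℝ} (hw1 : ∑ i, w i = 1) :
    Var[fun ω ↦ ∑ i, w i * X i ω; μ] = ∑ i, w i * Var[X i; μ]
      - (∑ i, ∑ j, w i * w j * Var[fun ω ↦ X i ω - X j ω; μ]) / 2 := by
  have hcov : ∀ i j, cov[X i, X j; μ]
      = (Var[X i; μ] + Var[X j; μ] - Var[fun ω ↦ X i ω - X j ω; μ]) / 2 := fun i j ↦ by
    rw [variance_fun_sub (hX i) (hX j)]; ring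
  have hleft : ∑ i, ∑ j, w i * w j * Var[X i; μ] = ∑ i, w i * Var[X i; μ] := by
    simp_rw [mul_right_comm _ _ (Var[X _; μ]), ← Finset.mul_sum, hw1, mul_one]
  have hright : ∑ i, ∑ j, w i * w j * Var[X j; μ] = ∑ i, w i * Var[X i; μ] := by
    rw [Finset.sum_comm, ← hleft]
    simp_rw [mul_comm (w _) (w _)]
  rw [variance_fun_sum fun i ↦ (hX i).const_mul (w i)]
  simp only [covariance_const_mul_left, covariance_const_mul_right, hcov]
  calc _ = (∑ i, ∑ j, w i * w j * Var[X i; μ] + ∑ i, ∑ j, w i * w j * Var[X j; μ]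
        - ∑ i, ∑ j, w i * w j * Var[fun ω ↦ X i ω - X j ω; μ]) / 2 := by
        simp only [← Finset.sum_add_distrib, ← Finset.sum_sub_distrib, Finset.sum_div]
        exact Finset.sum_congr rfl fun i _ ↦ Finset.sum_congr rfl fun j _ ↦ by ring
    _ = _ := by rw [hleft, hright]; ring

lemma variance_convex_combination_lt [IsFiniteMeasure μ] [Fintype ι] {X : ι → Ω → ℝ}
    (hX : ∀ i, MemLp (X i) 2 μ) {w : ι → ℝ} (hw : ∀ i, 0 < w i) (hw1 : ∑ i, w i = 1)
    {a b : ι} (hXab : 0 < Var[fun ω ↦ X a ω - X b ω; μ]) :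
    Var[fun ω ↦ ∑ i, w i * X i ω; μ] < ∑ i, w i * Var[X i; μ] := by
  have hterm_nonneg : ∀ i j, 0 ≤ w i * w j * Var[fun ω ↦ X i ω - X j ω; μ] := fun i j ↦
    mul_nonneg (mul_pos (hw i) (hw j)).le (variance_nonneg _ _)
  have hsum_pos : 0 < ∑ i, ∑ j, w i * w j * Var[fun ω ↦ X i ω - X j ω; μ] :=
    Finset.sum_pos' (fun i _ ↦ Finset.sum_nonneg fun j _ ↦ hterm_nonneg i j)
      ⟨a, Finset.mem_univ a, Finset.sum_pos' (fun j _ ↦ hterm_nonneg a j)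
        ⟨b, Finset.mem_univ b, mul_pos (mul_pos (hw a) (hw b)) hXab⟩⟩
  rw [variance_convex_combination hX hw1]
  linarith

end

lemma sum_mul_le_ciSup {ι : Type*} [Fintype ι] {w f : ι → ℝ} (hw : ∀ i, 0 ≤ w i)
    (hw1 : ∑ i, w i = 1) : ∑ i, w i * f i ≤ ⨆ i, f i :=
  calc ∑ i, w i * f i ≤ ∑ i, w i * ⨆ j, f j := Finset.sum_le_sum fun i _ ↦
        mul_le_mul_of_nonneg_left (le_ciSup (Set.finite_range f).bddAbove i) (hw i)
    _ = ⨆ j, f j := by rw [← Finset.sum_mul, hw1, one_mul]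

/-- If the components are regular (their PITs have law supported on all of
`[0,1]`) and pairwise distinct with positive probability, then the PIT of the linear pool
has variance strictly smaller than the maximum of the component variances
(Theorem 3(b) of Gneiting–Ranjan). -/
theorem linear_pool_variance_lt_max
    {Ω : Type*} [MeasurableSpace Ω] (Q : Measure Ω) [IsProbabilityMeasure Q]
    (k : ℕ) (hk : 2 ≤ k) (Z : Fin k → Ω → ℝ)
    (hZmeas : ∀ i, Measurable (Z i))
    (hZrange : ∀ i, ∀ᵐ ω ∂Q, Z i ω ∈ Set.Icc (0 : ℝ) 1)
    (hZreg : ∀ i, msupport (Q.map (Z i)) = Set.Icc (0 : ℝ) 1)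
    (hZne : ∀ i j, i ≠ j → 0 < Q {ω | Z i ω ≠ Z j ω})
    (w : Fin k → ℝ) (hw : ∀ i, 0 < w i) (hw1 : ∑ i, w i = 1) :
    variance (fun ω => ∑ i, w i * Z i ω) Q < ⨆ i, variance (Z i) Q := by
  have hL2 : ∀ i, MemLp (Z i) 2 Q := fun i ↦
    MemLp.of_bound (hZmeas i).aestronglyMeasurable 1 <| by
      filter_upwards [hZrange i] with ω hω
      rw [Real.norm_eq_abs, abs_le]
      exact ⟨by linarith [hω.1], hω.2⟩
  have hzero_mem : ∀ i, (0 : ℝ) ∈ msupport (Q.map (Z i)) := fun i ↦ by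
    rw [hZreg i]; exact ⟨le_rfl, zero_le_one⟩
  have hnonneg : ∀ i, ∀ᵐ ω ∂Q, 0 ≤ Z i ω := fun i ↦ by
    filter_upwards [hZrange i] with ω hω using hω.1
  let a : Fin k := ⟨0, by omega⟩
  let b : Fin k := ⟨1, by omega⟩
  have hab : a ≠ b := by simp [a, b, Fin.ext_iff]
  calc variance (fun ω => ∑ i, w i * Z i ω) Q < ∑ i, w i * variance (Z i) Q :=
        variance_convex_combination_lt hL2 hw hw1 <|
          variance_sub_pos_of_mem_msupport_map (hL2 a) (hL2 b) (hzero_mem a) (hzero_mem b)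
            (hnonneg a) (hnonneg b) (hZne a b hab)
    _ ≤ ⨆ i, variance (Z i) Q := sum_mul_le_ciSup (fun i ↦ (hw i).le) hw1
end

section
/- Let (Ω, 𝒜, Q) be a probability space, let k ≥ 2, and let Z₁, …, Z_k be random variables on Ω taking values in [0,1] almost surely, such that for each i, Var(Z_i) = 1/12 and the support of the law of Z_i is the whole interval [0,1], and such that for all i ≠ j, Q(Z_i ≠ Z_j) > 0. Let w₁, …, w_k be strictly positive weights summing to 1. Then Var(Σ_{i=1}^k w_i Z_i) < 1/12. -/
open MeasureTheory ProbabilityTheory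

section Mixture

variable {Ω ι : Type*} [MeasurableSpace Ω] {μ : Measure Ω} [IsFiniteMeasure μ] [Fintype ι]
  {X : ι → Ω → ℝ}

lemma variance_weighted_sum_eq (hX : ∀ i, MemLp (X i) 2 μ) {w : ι → ℝ} (hw1 : ∑ i, w i = 1) :
    Var[fun ω ↦ ∑ i, w i * X i ω; μ] =
      ∑ i, w i * Var[X i; μ] - (∑ i, ∑ j, w i * w j * Var[fun ω ↦ X i ω - X j ω; μ]) / 2 := by
  have hcov : ∀ i j, cov[X i, X j; μ] =
      (Var[X i; μ] + Var[X j; μ] - Var[fun ω ↦ X i ω - X j ω; μ]) / 2 := fun i j ↦ by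
    rw [variance_fun_sub (hX i) (hX j)]
    ring
  have hleft : ∑ i, ∑ j, w i * w j * Var[X i; μ] = ∑ i, w i * Var[X i; μ] :=
    Finset.sum_congr rfl fun i _ ↦ by rw [← Finset.sum_mul, ← Finset.mul_sum, hw1, mul_one]
  have hright : ∑ i, ∑ j, w i * w j * Var[X j; μ] = ∑ i, w i * Var[X i; μ] := by
    rw [Finset.sum_comm]
    exact Finset.sum_congr rfl fun j _ ↦ by rw [← Finset.sum_mul, ← Finset.sum_mul, hw1, one_mul]
  calc Var[fun ω ↦ ∑ i, w i * X i ω; μ]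
      = ∑ i, ∑ j, w i * w j * cov[X i, X j; μ] := by
        rw [variance_fun_sum (X := fun i ω ↦ w i * X i ω) fun i ↦ (hX i).const_mul (w i)]
        simp_rw [covariance_const_mul_left, covariance_const_mul_right, mul_assoc]
    _ = ∑ i, ∑ j, (w i * w j * Var[X i; μ] + w i * w j * Var[X j; μ]
          - w i * w j * Var[fun ω ↦ X i ω - X j ω; μ]) / 2 := by
        simp_rw [hcov, mul_div_assoc', mul_sub, mul_add]
    _ = _ := by
        simp only [← Finset.sum_div, Finset.sum_add_distrib, Finset.sum_sub_distrib, hleft, hright]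
        ring

end Mixture

section Support

variable {Ω : Type*} [MeasurableSpace Ω] {μ : Measure Ω} {X Y : Ω → ℝ}

lemma not_ae_le_of_mem_msupport (hY : Measurable Y) {x b : ℝ} (hx : x ∈ msupport (μ.map Y))
    (hb : b < x) : ¬ ∀ᵐ ω ∂μ, Y ω ≤ b := by
  intro hle
  have hpos := hx (Set.Ioi b) isOpen_Ioi hb
  rw [Measure.map_apply hY measurableSet_Ioi] at hpos
  refine hpos.ne' (measure_eq_zero_iff_ae_notMem.mpr ?_)
  filter_upwards [hle] with ω hω using not_lt.mpr hω

lemma nonpos_of_ae_sub_eq_of_mem_msupport (hY : Measurable Y) {x c : ℝ}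
    (hX : ∀ᵐ ω ∂μ, X ω ≤ x) (hx : x ∈ msupport (μ.map Y)) (hc : ∀ᵐ ω ∂μ, X ω - Y ω = c) :
    c ≤ 0 := by
  by_contra! hcpos
  refine not_ae_le_of_mem_msupport hY hx (sub_lt_self x hcpos) ?_
  filter_upwards [hX, hc] with ω hXω hcω
  linarith

lemma variance_sub_pos_of_mem_msupport [IsFiniteMeasure μ] (hX : Measurable X)
    (hY : Measurable Y) (hX2 : MemLp X 2 μ) (hY2 : MemLp Y 2 μ) {x : ℝ}
    (hXle : ∀ᵐ ω ∂μ, X ω ≤ x) (hYle : ∀ᵐ ω ∂μ, Y ω ≤ x)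
    (hXx : x ∈ msupport (μ.map X)) (hYx : x ∈ msupport (μ.map Y))
    (hne : 0 < μ {ω | X ω ≠ Y ω}) :
    0 < Var[fun ω ↦ X ω - Y ω; μ] := by
  refine (variance_nonneg _ μ).lt_of_ne fun hzero ↦ hne.ne' ?_
  set c := μ[fun ω ↦ X ω - Y ω]
  have hc : ∀ᵐ ω ∂μ, X ω - Y ω = c := ae_eq_integral_of_variance_eq_zero (hX2.sub hY2) hzero.symm
  have hc_nonpos : c ≤ 0 := nonpos_of_ae_sub_eq_of_mem_msupport hY hXle hYx hc
  have hc_nonneg : 0 ≤ c := by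
    have hc' : ∀ᵐ ω ∂μ, Y ω - X ω = -c := by
      filter_upwards [hc] with ω hω
      linarith
    linarith [nonpos_of_ae_sub_eq_of_mem_msupport hX hYle hXx hc']
  rw [← ae_iff]
  filter_upwards [hc] with ω hω
  linarith [le_antisymm hc_nonpos hc_nonneg]

end Support

/-- If the components are neutrally dispersed (PIT variance `1/12`)
and regular, and pairwise distinct with positive probability, then the linear pool is
overdispersed: the variance of its PIT is strictly less than `1/12`
(Theorem 3(c) of Gneiting–Ranjan). -/
theorem linear_pool_overdispersed
    {Ω : Type*} [MeasurableSpace Ω] (Q : Measure Ω) [IsProbabilityMeasure Q]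
    (k : ℕ) (hk : 2 ≤ k) (Z : Fin k → Ω → ℝ)
    (hZmeas : ∀ i, Measurable (Z i))
    (hZrange : ∀ i, ∀ᵐ ω ∂Q, Z i ω ∈ Set.Icc (0 : ℝ) 1)
    (hZvar : ∀ i, variance (Z i) Q = 1 / 12)
    (hZreg : ∀ i, msupport (Q.map (Z i)) = Set.Icc (0 : ℝ) 1)
    (hZne : ∀ i j, i ≠ j → 0 < Q {ω | Z i ω ≠ Z j ω})
    (w : Fin k → ℝ) (hw : ∀ i, 0 < w i) (hw1 : ∑ i, w i = 1) :
    variance (fun ω => ∑ i, w i * Z i ω) Q < 1 / 12 := by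
  have hZ2 : ∀ i, MemLp (Z i) 2 Q := fun i ↦
    memLp_of_bounded (hZrange i) (hZmeas i).aestronglyMeasurable 2
  have hZle : ∀ i, ∀ᵐ ω ∂Q, Z i ω ≤ 1 := fun i ↦ (hZrange i).mono fun _ h ↦ h.2
  have hZ1 : ∀ i, (1 : ℝ) ∈ msupport (Q.map (Z i)) := fun i ↦ by
    rw [hZreg i]
    exact ⟨zero_le_one, le_rfl⟩
  have hdiff : ∀ i j, 0 ≤ w i * w j * Var[fun ω ↦ Z i ω - Z j ω; Q] := fun i j ↦
    mul_nonneg (mul_pos (hw i) (hw j)).le (variance_nonneg _ _)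
  let i₀ : Fin k := ⟨0, by omega⟩
  let i₁ : Fin k := ⟨1, by omega⟩
  have hpair : 0 < w i₀ * w i₁ * Var[fun ω ↦ Z i₀ ω - Z i₁ ω; Q] :=
    mul_pos (mul_pos (hw i₀) (hw i₁)) <| variance_sub_pos_of_mem_msupport (hZmeas i₀)
      (hZmeas i₁) (hZ2 i₀) (hZ2 i₁) (hZle i₀) (hZle i₁) (hZ1 i₀) (hZ1 i₁)
      (hZne i₀ i₁ (by simp [i₀, i₁, Fin.ext_iff]))
  have hcorrection : 0 < ∑ i, ∑ j, w i * w j * Var[fun ω ↦ Z i ω - Z j ω; Q] :=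
    Finset.sum_pos' (fun i _ ↦ Finset.sum_nonneg fun j _ ↦ hdiff i j)
      ⟨i₀, Finset.mem_univ _, Finset.sum_pos' (fun j _ ↦ hdiff i₀ j)
        ⟨i₁, Finset.mem_univ _, hpair⟩⟩
  rw [variance_weighted_sum_eq hZ2 hw1]
  simp_rw [hZvar, ← Finset.sum_mul, hw1]
  linarith
end

section
/- Let (Ω, 𝒜, Q) be a probability space, let k ≥ 2, and let Z₁, …, Z_k be random variables on Ω each uniformly distributed on [0,1], such that for some i ≠ j, Q(Z_i ≠ Z_j) > 0. Let w₁, …, w_k be strictly positive weights summing to 1. Then the random variable Σ_{i=1}^k w_i Z_i is not uniformly distributed on [0,1]; indeed its variance is strictly less than 1/12. -/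
/-!
Strict convexity of `x ↦ x²` (Jensen) gives `(∑ wᵢ Zᵢ)² ≤ ∑ wᵢ Zᵢ²` pointwise, strictly wherever
`Zᵢ ≠ Zⱼ`; integrating, the pool has second moment `< ∑ wᵢ / 3 = 1/3` while its mean is still
`1/2`, so its variance is `< 1/12`, the variance of the uniform law on `[0,1]`.
-/

open MeasureTheory ProbabilityTheory

lemma setIntegral_Icc_zero_one_pow (n : ℕ) : ∫ x in Set.Icc (0 : ℝ) 1, x ^ n = 1 / (n + 1) := by
  rw [integral_Icc_eq_integral_Ioc, ← intervalIntegral.integral_of_le zero_le_one, integral_pow]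
  simp

section UniformLaw

variable {Ω : Type*} [MeasurableSpace Ω] {Q : Measure Ω} {Y : Ω → ℝ}

lemma ae_mem_Icc_of_map_eq_restrict_Icc (hY : AEMeasurable Y Q)
    (hlaw : Q.map Y = volume.restrict (Set.Icc 0 1)) : ∀ᵐ ω ∂Q, Y ω ∈ Set.Icc (0 : ℝ) 1 :=
  ae_of_ae_map hY (hlaw ▸ ae_restrict_mem measurableSet_Icc)

lemma memLp_of_map_eq_restrict_Icc [IsFiniteMeasure Q] (hY : AEMeasurable Y Q)
    (hlaw : Q.map Y = volume.restrict (Set.Icc 0 1)) (p : ENNReal) : MemLp Y p Q :=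
  memLp_of_bounded (ae_mem_Icc_of_map_eq_restrict_Icc hY hlaw) hY.aestronglyMeasurable p

lemma integral_pow_of_map_eq_restrict_Icc (hY : AEMeasurable Y Q)
    (hlaw : Q.map Y = volume.restrict (Set.Icc 0 1)) (n : ℕ) :
    ∫ ω, Y ω ^ n ∂Q = 1 / (n + 1) := by
  rw [← setIntegral_Icc_zero_one_pow, ← hlaw,
    integral_map hY (continuous_pow n).aestronglyMeasurable]

lemma integral_of_map_eq_restrict_Icc (hY : AEMeasurable Y Q)
    (hlaw : Q.map Y = volume.restrict (Set.Icc 0 1)) : ∫ ω, Y ω ∂Q = 1 / 2 := by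
  simpa [one_add_one_eq_two] using integral_pow_of_map_eq_restrict_Icc hY hlaw 1

lemma variance_of_map_eq_restrict_Icc [IsProbabilityMeasure Q] (hY : AEMeasurable Y Q)
    (hlaw : Q.map Y = volume.restrict (Set.Icc 0 1)) : variance Y Q = 1 / 12 := by
  rw [variance_eq_sub (memLp_of_map_eq_restrict_Icc hY hlaw 2)]
  simp only [Pi.pow_apply, integral_pow_of_map_eq_restrict_Icc hY hlaw 2,
    integral_of_map_eq_restrict_Icc hY hlaw]
  norm_num

end UniformLaw

lemma integral_sq_sum_lt_sum_mul_integral_sq {Ω ι : Type*} [MeasurableSpace Ω] [Fintype ι]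
    {μ : Measure Ω} {Z : ι → Ω → ℝ} (hZ : ∀ i, MemLp (Z i) 2 μ) {w : ι → ℝ}
    (hw : ∀ i, 0 < w i) (hw1 : ∑ i, w i = 1) {i j : ι} (hij : 0 < μ {ω | Z i ω ≠ Z j ω}) :
    ∫ ω, (∑ i, w i * Z i ω) ^ 2 ∂μ < ∑ i, w i * ∫ ω, Z i ω ^ 2 ∂μ := by
  have hpool : MemLp (fun ω => ∑ i, w i * Z i ω) 2 μ :=
    memLp_finsetSum _ fun i _ => (hZ i).const_mul (w i)
  have hmix : Integrable (fun ω => ∑ i, w i * Z i ω ^ 2) μ :=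
    integrable_finsetSum _ fun i _ => (hZ i).integrable_sq.const_mul (w i)
  have hsq := Even.strictConvexOn_pow even_two two_ne_zero
  have jensen (ω : Ω) : (∑ i, w i * Z i ω) ^ 2 ≤ ∑ i, w i * Z i ω ^ 2 :=
    hsq.convexOn.map_sum_le (fun i _ => (hw i).le) hw1 fun i _ => Set.mem_univ _
  have jensen_strict (ω : Ω) (hω : Z i ω ≠ Z j ω) :
      (∑ i, w i * Z i ω) ^ 2 < ∑ i, w i * Z i ω ^ 2 :=
    hsq.map_sum_lt (fun i _ => hw i) hw1 (fun i _ => Set.mem_univ _)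
      ⟨i, Finset.mem_univ _, j, Finset.mem_univ _, hω⟩
  simp_rw [← integral_const_mul]
  rw [← integral_finsetSum _ fun i _ => (hZ i).integrable_sq.const_mul (w i), ← sub_pos,
    ← integral_sub hmix hpool.integrable_sq, integral_pos_iff_support_of_nonneg
      (fun ω => sub_nonneg.2 (jensen ω)) (hmix.sub hpool.integrable_sq)]
  exact hij.trans_le (measure_mono fun ω hω => (sub_pos.2 (jensen_strict ω hω)).ne')

theorem linear_pool_of_uniform_not_uniform_general
    {Ω : Type*} [MeasurableSpace Ω] (Q : Measure Ω) [IsProbabilityMeasure Q]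
    (k : ℕ) (Z : Fin k → Ω → ℝ)
    (hZmeas : ∀ i, Measurable (Z i))
    (hZunif : ∀ i, Q.map (Z i) = volume.restrict (Set.Icc (0 : ℝ) 1))
    (hZne : ∃ i j, i ≠ j ∧ 0 < Q {ω | Z i ω ≠ Z j ω})
    (w : Fin k → ℝ) (hw : ∀ i, 0 < w i) (hw1 : ∑ i, w i = 1) :
    Q.map (fun ω => ∑ i, w i * Z i ω) ≠ volume.restrict (Set.Icc (0 : ℝ) 1) ∧
      variance (fun ω => ∑ i, w i * Z i ω) Q < 1 / 12 := by
  obtain ⟨i, j, -, hij⟩ := hZne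
  have hZ i := memLp_of_map_eq_restrict_Icc (hZmeas i).aemeasurable (hZunif i)
  have hmean : ∫ ω, ∑ i, w i * Z i ω ∂Q = 1 / 2 := by
    rw [integral_finsetSum _ fun i _ => ((hZ i 1).integrable le_rfl).const_mul (w i)]
    simp only [integral_const_mul,
      fun i => integral_of_map_eq_restrict_Icc (hZmeas i).aemeasurable (hZunif i),
      ← Finset.sum_mul, hw1, one_mul]
  have hsecond : ∫ ω, (∑ i, w i * Z i ω) ^ 2 ∂Q < 1 / 3 := by
    refine (integral_sq_sum_lt_sum_mul_integral_sq (fun i => hZ i 2) hw hw1 hij).trans_eq ?_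
    simp only [fun i => integral_pow_of_map_eq_restrict_Icc (hZmeas i).aemeasurable (hZunif i),
      ← Finset.sum_mul, hw1]
    norm_num
  have hvar : variance (fun ω => ∑ i, w i * Z i ω) Q < 1 / 12 := by
    rw [variance_eq_sub (memLp_finsetSum _ fun i _ => (hZ i 2).const_mul (w i))]
    simp only [Pi.pow_apply, hmean]
    linarith
  have hpool_meas : Measurable fun ω => ∑ i, w i * Z i ω :=
    Finset.measurable_sum _ fun i _ => (hZmeas i).const_mul (w i)
  exact ⟨fun hlaw => hvar.ne (variance_of_map_eq_restrict_Icc hpool_meas.aemeasurable hlaw), hvar⟩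

/-- If `Z₁, …, Z_k` are uniformly distributed on `[0,1]` and some pair of
them differs with positive probability, then a convex combination with strictly positive
weights is not uniformly distributed on `[0,1]`; indeed its variance is strictly less
than `1/12` (core of Theorem 4 of Gneiting–Ranjan; cf. Hora 2004). -/
theorem linear_pool_of_uniform_not_uniform
    {Ω : Type*} [MeasurableSpace Ω] (Q : Measure Ω) [IsProbabilityMeasure Q]
    (k : ℕ) (hk : 2 ≤ k) (Z : Fin k → Ω → ℝ)
    (hZmeas : ∀ i, Measurable (Z i))
    (hZunif : ∀ i, Q.map (Z i) = volume.restrict (Set.Icc (0 : ℝ) 1))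
    (hZne : ∃ i j, i ≠ j ∧ 0 < Q {ω | Z i ω ≠ Z j ω})
    (w : Fin k → ℝ) (hw : ∀ i, 0 < w i) (hw1 : ∑ i, w i = 1) :
    Q.map (fun ω => ∑ i, w i * Z i ω) ≠ volume.restrict (Set.Icc (0 : ℝ) 1) ∧
      variance (fun ω => ∑ i, w i * Z i ω) Q < 1 / 12 :=
  linear_pool_of_uniform_not_uniform_general Q k Z hZmeas hZunif hZne w hw hw1
end

section
/- Let (Ω, 𝒜, Q) be a probability space, let k ≥ 2, and let X₁, …, X_k be square-integrable real random variables on Ω that all have the same distribution, with common variance σ² ∈ (0, ∞). Let w₁, …, w_k be strictly positive weights with Σ_{i=1}^k w_i ≤ 1, and suppose that the random variable S = Σ_{i=1}^k w_i X_i also has the same distribution as X₁. Then Σ_{i=1}^k w_i = 1 and X₁ = X₂ = ⋯ = X_k almost surely. -/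
/-!
Since `Var (X i - X j) ≥ 0` and all variances equal `σ²`, every covariance `cov (X i, X j)` is at
most `σ²`. Hence `σ² = Var S = ∑ᵢ ∑ⱼ wᵢ wⱼ cov (X i, X j) ≤ (∑ᵢ wᵢ)² σ²`, which forces
`∑ᵢ wᵢ = 1`; then the inequality is an equality, so every covariance equals `σ²`, i.e.
`Var (X i - X j) = 0`, and since the means agree, `X i = X j` almost surely.
-/

open MeasureTheory ProbabilityTheory Finset

namespace ProbabilityTheory

variable {Ω : Type*} [MeasurableSpace Ω] {μ : Measure Ω} [IsFiniteMeasure μ] {X Y : Ω → ℝ}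

lemma two_mul_covariance_le_variance_add_variance (hX : MemLp X 2 μ) (hY : MemLp Y 2 μ) :
    2 * cov[X, Y; μ] ≤ Var[X; μ] + Var[Y; μ] := by
  have := variance_nonneg (X - Y) μ
  rw [variance_sub hX hY] at this
  linarith

lemma ae_eq_of_two_mul_covariance_eq (hX : MemLp X 2 μ) (hY : MemLp Y 2 μ)
    (hmean : μ[X] = μ[Y]) (hcov : 2 * cov[X, Y; μ] = Var[X; μ] + Var[Y; μ]) :
    X =ᵐ[μ] Y := by
  have hvar : Var[X - Y; μ] = 0 := by
    rw [variance_sub hX hY]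
    linarith
  have hmean_sub : μ[X - Y] = 0 := by
    rw [integral_sub' (hX.integrable one_le_two) (hY.integrable one_le_two), hmean, sub_self]
  filter_upwards [ae_eq_integral_of_variance_eq_zero (hX.sub hY) hvar] with ω hω
  rw [hmean_sub, Pi.sub_apply, sub_eq_zero] at hω
  exact hω

lemma variance_fun_sum_const_mul {ι : Type*} [Fintype ι] {X : ι → Ω → ℝ}
    (hX : ∀ i, MemLp (X i) 2 μ) (w : ι → ℝ) :
    Var[fun ω ↦ ∑ i, w i * X i ω; μ] = ∑ i, ∑ j, w i * w j * cov[X i, X j; μ] := by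
  rw [variance_fun_sum fun i ↦ (hX i).const_mul (w i)]
  simp only [covariance_const_mul_left, covariance_const_mul_right]
  exact sum_congr rfl fun i _ ↦ sum_congr rfl fun j _ ↦ by ring

end ProbabilityTheory

lemma sum_sum_mul_mul_eq_sq_mul_sub {ι R : Type*} [Fintype ι] [CommRing R] (w : ι → R)
    (c : ι → ι → R) (v : R) :
    ∑ i, ∑ j, w i * w j * c i j = (∑ i, w i) ^ 2 * v - ∑ i, ∑ j, w i * w j * (v - c i j) := by
  rw [sq, sum_mul_sum, sum_mul]
  simp only [sum_mul, mul_sub, sum_sub_distrib, sub_sub_cancel]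

lemma sum_eq_one_and_eq_of_le_sum_sum_mul {ι : Type*} [Fintype ι] {w : ι → ℝ} {c : ι → ι → ℝ}
    {v : ℝ} (hw : ∀ i, 0 < w i) (hw1 : ∑ i, w i ≤ 1) (hv : 0 < v) (hc : ∀ i j, c i j ≤ v)
    (hsum : v ≤ ∑ i, ∑ j, w i * w j * c i j) :
    ∑ i, w i = 1 ∧ ∀ i j, c i j = v := by
  have hgap : ∀ i j, 0 ≤ w i * w j * (v - c i j) := fun i j ↦
    mul_nonneg (mul_pos (hw i) (hw j)).le (sub_nonneg.mpr (hc i j))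
  have hsplit := sum_sum_mul_mul_eq_sq_mul_sub w c v
  have hgap_sum : 0 ≤ ∑ i, ∑ j, w i * w j * (v - c i j) :=
    sum_nonneg fun i _ ↦ sum_nonneg fun j _ ↦ hgap i j
  have hs0 : 0 ≤ ∑ i, w i := sum_nonneg fun i _ ↦ (hw i).le
  have hs_sq : 1 ≤ (∑ i, w i) ^ 2 :=
    le_of_mul_le_mul_right (by linarith : 1 * v ≤ (∑ i, w i) ^ 2 * v) hv
  have hs : ∑ i, w i = 1 := by nlinarith
  refine ⟨hs, fun i j ↦ ?_⟩
  have hgap_zero : ∑ i, ∑ j, w i * w j * (v - c i j) = 0 := by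
    rw [hs] at hsplit
    linarith
  rw [sum_eq_zero_iff_of_nonneg fun i _ ↦ sum_nonneg fun j _ ↦ hgap i j] at hgap_zero
  have hij := (sum_eq_zero_iff_of_nonneg fun j _ ↦ hgap i j).mp (hgap_zero i (mem_univ i)) j
    (mem_univ j)
  have hwij : w i * w j ≠ 0 := (mul_pos (hw i) (hw j)).ne'
  linarith [(mul_eq_zero.mp hij).resolve_left hwij]

/-- Rigidity of linear combinations of identically distributed
square-integrable random variables with common positive variance: if a combination with
strictly positive weights summing to at most one has the same distribution as the
components, then the weights sum to one and the components coincide almost surely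
(the variance–covariance argument underlying Theorem 6 of Gneiting–Ranjan). -/
theorem identically_distributed_linear_combination_rigidity
    {Ω : Type*} [MeasurableSpace Ω] (Q : Measure Ω) [IsProbabilityMeasure Q]
    (k : ℕ) (hk : 2 ≤ k) (X : Fin k → Ω → ℝ)
    (hXL2 : ∀ i, MemLp (X i) 2 Q)
    (hXident : ∀ i j, Q.map (X i) = Q.map (X j))
    (σ2 : ℝ) (hσ2 : 0 < σ2) (hXvar : ∀ i, variance (X i) Q = σ2)
    (w : Fin k → ℝ) (hw : ∀ i, 0 < w i) (hw1 : ∑ i, w i ≤ 1)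
    (hS : Q.map (fun ω => ∑ i, w i * X i ω) = Q.map (X ⟨0, by omega⟩)) :
    ∑ i, w i = 1 ∧ ∀ i j, X i =ᵐ[Q] X j := by
  have hSL2 : MemLp (fun ω ↦ ∑ i, w i * X i ω) 2 Q :=
    memLp_finsetSum _ fun i _ ↦ (hXL2 i).const_mul (w i)
  have hvarS : σ2 = ∑ i, ∑ j, w i * w j * cov[X i, X j; Q] := by
    rw [← variance_fun_sum_const_mul hXL2, ← hXvar ⟨0, by omega⟩]
    exact (IdentDistrib.variance_eq ⟨hSL2.aemeasurable, (hXL2 _).aemeasurable, hS⟩).symm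
  have hcov_le : ∀ i j, cov[X i, X j; Q] ≤ σ2 := fun i j ↦ by
    linarith [two_mul_covariance_le_variance_add_variance (hXL2 i) (hXL2 j), hXvar i, hXvar j]
  obtain ⟨hs, hcov⟩ := sum_eq_one_and_eq_of_le_sum_sum_mul hw hw1 hσ2 hcov_le hvarS.le
  refine ⟨hs, fun i j ↦ ae_eq_of_two_mul_covariance_eq (hXL2 i) (hXL2 j) ?_ ?_⟩
  · exact IdentDistrib.integral_eq ⟨(hXL2 i).aemeasurable, (hXL2 j).aemeasurable, hXident i j⟩
  · rw [hcov, hXvar, hXvar]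
    ring
end

section
/- Let (Ω, 𝒜, Q) be a probability space, let Y be a random variable taking values in {0, 1} almost surely, let p be a random variable taking values in [0,1], and let V be uniformly distributed on [0,1] and independent of the σ-algebra generated by p and Y. Define the randomized probability integral transform Z = V·p on the event {Y = 0} and Z = p + V·(1 − p) on the event {Y = 1}. Then Z is uniformly distributed on [0,1] if and only if Q(Y = 0 | σ(p)) = p almost surely. -/
/-!
Write `W = 1{Y = 0}`. Integrating out the independent uniform `V` for fixed `(p, Y)` gives
`(n + 1) E[Zⁿ] = 1 - ∑_{k < n} (E[W pᵏ] - E[p pᵏ])`. Since moments determine a finite measure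
carried by `[0, 1]`, `Z` is uniform iff `E[W pᵏ] = E[p pᵏ]` for every `k`, i.e. iff the measures
`B ↦ E[W; p ∈ B]` and `B ↦ E[p; p ∈ B]` (both carried by `[0, 1]`) have the same moments, i.e.
coincide. Their equality is exactly the defining property of `E[W | p] = p`.
-/

open MeasureTheory ProbabilityTheory Set
open Finset (range sum_range_succ)

theorem Finset.forall_sum_range_eq_zero_iff {M : Type*} [AddCommGroup M] (a : ℕ → M) :
    (∀ n, ∑ k ∈ range n, a k = 0) ↔ ∀ k, a k = 0 :=
  ⟨fun h k => by simpa [sum_range_succ, h k] using h (k + 1),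
    fun h _ => Finset.sum_eq_zero fun k _ => h k⟩

theorem integral_Icc_zero_one_pow (n : ℕ) : ∫ x in Icc (0 : ℝ) 1, x ^ n = 1 / (n + 1) := by
  rw [integral_Icc_eq_integral_Ioc, ← intervalIntegral.integral_of_le zero_le_one, integral_pow]
  simp

theorem integral_Icc_zero_one_add_mul_sub_pow (x : ℝ) (n : ℕ) :
    (n + 1) * ∫ v in Icc (0 : ℝ) 1, (x + v * (1 - x)) ^ n = ∑ k ∈ range (n + 1), x ^ k := by
  rcases eq_or_ne x 1 with rfl | hx
  · simp
  have hx' : 1 - x ≠ 0 := sub_ne_zero.2 hx.symm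
  rw [integral_Icc_eq_integral_Ioc, ← intervalIntegral.integral_of_le zero_le_one]
  simp_rw [add_comm x, mul_comm _ (1 - x)]
  rw [intervalIntegral.integral_comp_mul_add (fun u => u ^ n) hx', integral_pow,
    geom_sum_eq hx, smul_eq_mul]
  field_simp
  ring

section MomentDeterminacy

variable {X : Type*} [MeasurableSpace X] {ρ : Measure X} [IsFiniteMeasure ρ] {s : Set X}

theorem ContinuousOn.integrable_of_ae_mem [TopologicalSpace X] [T2Space X]
    [OpensMeasurableSpace X] {g : X → ℝ} (hg : ContinuousOn g s) (hs : IsCompact s)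
    (hρ : ∀ᵐ x ∂ρ, x ∈ s) : Integrable g ρ := by
  rw [← Measure.restrict_eq_self_of_ae_mem hρ]
  exact hg.integrableOn_compact hs

theorem dist_integral_le_of_ae_mem (hρ : ∀ᵐ x ∂ρ, x ∈ s) {f g : X → ℝ} (hf : Integrable f ρ)
    (hg : Integrable g ρ) {C : ℝ} (hC : ∀ x ∈ s, dist (f x) (g x) ≤ C) :
    dist (∫ x, f x ∂ρ) (∫ x, g x ∂ρ) ≤ C * ρ.real univ := by
  rw [dist_eq_norm, ← integral_sub hf hg]
  refine norm_integral_le_of_norm_le_const ?_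
  filter_upwards [hρ] with x hx
  exact dist_eq_norm (f x) (g x) ▸ hC x hx

theorem MeasureTheory.Measure.ext_of_forall_integral_pow_eq {a b : ℝ} {μ ν : Measure ℝ}
    [IsFiniteMeasure μ] [IsFiniteMeasure ν] (hμ : ∀ᵐ x ∂μ, x ∈ Icc a b)
    (hν : ∀ᵐ x ∂ν, x ∈ Icc a b) (h : ∀ n : ℕ, ∫ x, x ^ n ∂μ = ∫ x, x ^ n ∂ν) : μ = ν := by
  have hint : ∀ ρ : Measure ℝ, [IsFiniteMeasure ρ] → (∀ᵐ x ∂ρ, x ∈ Icc a b) →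
      ∀ g : ℝ → ℝ, Continuous g → Integrable g ρ := fun _ _ hρ _ hg =>
    hg.continuousOn.integrable_of_ae_mem isCompact_Icc hρ
  have hpoly : ∀ q : Polynomial ℝ, ∫ x, q.eval x ∂μ = ∫ x, q.eval x ∂ν := by
    intro q
    simp_rw [q.eval_eq_sum_range]
    rw [integral_finsetSum _ fun i _ => hint μ hμ _ (by fun_prop),
      integral_finsetSum _ fun i _ => hint ν hν _ (by fun_prop)]
    simp_rw [integral_const_mul, h]
  refine ext_of_forall_integral_eq_of_IsFiniteMeasure fun f => eq_of_forall_dist_le fun ε hε => ?_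
  set M := μ.real univ + ν.real univ
  have hM : 0 ≤ M := by positivity
  obtain ⟨q, hq⟩ := exists_polynomial_near_of_continuousOn a b f f.continuous.continuousOn
    (ε / (M + 1)) (by positivity)
  have hfq : ∀ x ∈ Icc a b, dist (f x) (q.eval x) ≤ ε / (M + 1) := fun x hx => by
    rw [dist_comm]; exact (hq x hx).le
  have hqc : Continuous fun x => q.eval x := q.continuous
  calc dist (∫ x, f x ∂μ) (∫ x, f x ∂ν)
      ≤ dist (∫ x, f x ∂μ) (∫ x, q.eval x ∂μ) + dist (∫ x, f x ∂ν) (∫ x, q.eval x ∂ν) := by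
        rw [hpoly q, dist_comm (∫ x, f x ∂ν)]; exact dist_triangle _ _ _
    _ ≤ ε / (M + 1) * μ.real univ + ε / (M + 1) * ν.real univ :=
        add_le_add (dist_integral_le_of_ae_mem hμ (hint μ hμ _ f.continuous) (hint μ hμ _ hqc) hfq)
          (dist_integral_le_of_ae_mem hν (hint ν hν _ f.continuous) (hint ν hν _ hqc) hfq)
    _ ≤ ε := by
        rw [← mul_add, div_mul_eq_mul_div, div_le_iff₀ (by positivity)]
        nlinarith

theorem eq_volume_restrict_Icc_zero_one_iff {μ : Measure ℝ} [IsFiniteMeasure μ]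
    (hμ : ∀ᵐ x ∂μ, x ∈ Icc (0 : ℝ) 1) :
    μ = volume.restrict (Icc 0 1) ↔ ∀ n : ℕ, (n + 1) * ∫ x, x ^ n ∂μ = 1 := by
  refine ⟨fun h n => ?_, fun h => Measure.ext_of_forall_integral_pow_eq hμ
    (ae_restrict_mem measurableSet_Icc) fun n => ?_⟩
  · rw [h, integral_Icc_zero_one_pow]
    field_simp
  · rw [integral_Icc_zero_one_pow, eq_div_iff (by positivity), mul_comm, h n]

end MomentDeterminacy

theorem ProbabilityTheory.IndepFun.integral_comp_eq_integral_integral {Ω α β : Type*}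
    [MeasurableSpace Ω] [MeasurableSpace α] [MeasurableSpace β] {Q : Measure Ω}
    [IsFiniteMeasure Q] {X : Ω → α} {V : Ω → β} (hXV : IndepFun X V Q) (hX : Measurable X)
    (hV : Measurable V) {φ : α × β → ℝ} (hφ : Measurable φ)
    (hint : Integrable (fun ω => φ (X ω, V ω)) Q) :
    ∫ ω, φ (X ω, V ω) ∂Q = ∫ ω, ∫ v, φ (X ω, v) ∂(Q.map V) ∂Q := by
  have hmap : Q.map (fun ω => (X ω, V ω)) = (Q.map X).prod (Q.map V) :=
    (indepFun_iff_map_prod_eq_prod_map_map hX.aemeasurable hV.aemeasurable).1 hXV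
  have hXV' : Measurable fun ω => (X ω, V ω) := hX.prodMk hV
  rw [← integral_map hX.aemeasurable
      hφ.stronglyMeasurable.integral_prod_right'.aestronglyMeasurable, ← integral_prod _ (by rwa [← hmap, integrable_map_measure hφ.aestronglyMeasurable
      hXV'.aemeasurable]), ← hmap, integral_map hXV'.aemeasurable hφ.aestronglyMeasurable]

section WeightedLaw

variable {Ω α : Type*} [MeasurableSpace Ω] [MeasurableSpace α] {Q : Measure Ω} {p : Ω → α}

noncomputable def weightedLaw (Q : Measure Ω) (f : Ω → ℝ) (p : Ω → α) : Measure α :=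
  (Q.withDensity fun ω => ENNReal.ofReal (f ω)).map p

theorem isFiniteMeasure_weightedLaw {f : Ω → ℝ} (hf : Integrable f Q) :
    IsFiniteMeasure (weightedLaw Q f p) :=
  have := isFiniteMeasure_withDensity_ofReal hf.2
  Measure.isFiniteMeasure_map _ _

theorem ae_weightedLaw_mem {f : Ω → ℝ} (hp : Measurable p) {B : Set α} (hB : MeasurableSet B)
    (hpB : ∀ ω, p ω ∈ B) : ∀ᵐ x ∂weightedLaw Q f p, x ∈ B :=
  (ae_map_iff hp.aemeasurable hB).2 (ae_of_all _ hpB)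

theorem weightedLaw_apply {f : Ω → ℝ} (hf : Integrable f Q) (hf0 : 0 ≤ f) (hp : Measurable p)
    {B : Set α} (hB : MeasurableSet B) :
    weightedLaw Q f p B = ENNReal.ofReal (∫ ω in p ⁻¹' B, f ω ∂Q) := by
  rw [weightedLaw, Measure.map_apply hp hB, withDensity_apply _ (hp hB),
    ofReal_integral_eq_lintegral_ofReal hf.integrableOn (ae_of_all _ hf0)]

theorem weightedLaw_eq_weightedLaw_iff {f g : Ω → ℝ} (hf : Integrable f Q) (hg : Integrable g Q)
    (hf0 : 0 ≤ f) (hg0 : 0 ≤ g) (hp : Measurable p) :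
    weightedLaw Q f p = weightedLaw Q g p ↔
      ∀ B, MeasurableSet B → ∫ ω in p ⁻¹' B, f ω ∂Q = ∫ ω in p ⁻¹' B, g ω ∂Q := by
  rw [Measure.ext_iff]
  refine forall₂_congr fun B hB => ?_
  rw [weightedLaw_apply hf hf0 hp hB, weightedLaw_apply hg hg0 hp hB,
    ENNReal.ofReal_eq_ofReal_iff (integral_nonneg fun ω => hf0 ω)
      (integral_nonneg fun ω => hg0 ω)]

theorem integral_weightedLaw {f : Ω → ℝ} (hf : Measurable f) (hf0 : 0 ≤ f) (hp : Measurable p)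
    {g : α → ℝ} (hg : Measurable g) :
    ∫ x, g x ∂weightedLaw Q f p = ∫ ω, f ω * g (p ω) ∂Q := by
  rw [weightedLaw, integral_map hp.aemeasurable hg.aestronglyMeasurable,
    integral_withDensity_eq_integral_toReal_smul hf.ennreal_ofReal
      (ae_of_all _ fun _ => ENNReal.ofReal_lt_top)]
  simp_rw [ENNReal.toReal_ofReal (hf0 _), smul_eq_mul]

theorem condExp_comap_ae_eq_iff [IsFiniteMeasure Q] (hp : Measurable p) {f g : Ω → ℝ}
    (hf : Integrable f Q) (hg : Integrable g Q)
    (hgm : StronglyMeasurable[MeasurableSpace.comap p ‹_›] g) :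
    Q[f | MeasurableSpace.comap p ‹_›] =ᵐ[Q] g ↔
      ∀ B, MeasurableSet B → ∫ ω in p ⁻¹' B, f ω ∂Q = ∫ ω in p ⁻¹' B, g ω ∂Q := by
  have hm := hp.comap_le
  constructor
  · intro h B hB
    rw [← setIntegral_condExp hm hf ⟨B, hB, rfl⟩]
    exact setIntegral_congr_ae (hp hB) (h.mono fun ω hω _ => hω)
  · intro h
    refine (ae_eq_condExp_of_forall_setIntegral_eq hm hf (fun _ _ _ => hg.integrableOn) ?_
      hgm.aestronglyMeasurable).symm
    rintro _ ⟨B, hB, rfl⟩ -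
    exact (h B hB).symm

end WeightedLaw

/-- The randomized PIT of the forecast cdf `F = x • 1[0, ∞) + (1 - x) • 1[1, ∞)` at the outcome
`y`, with randomization `v`: `F(y-) + v (F(y) - F(y-))`. -/
noncomputable def binaryPIT (x y v : ℝ) : ℝ := if y = 0 then v * x else x + v * (1 - x)

theorem binaryPIT_mem_Icc {x v : ℝ} (hx : x ∈ Icc (0 : ℝ) 1) (hv : v ∈ Icc (0 : ℝ) 1) (y : ℝ) :
    binaryPIT x y v ∈ Icc (0 : ℝ) 1 := by
  obtain ⟨hx0, hx1⟩ := hx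
  obtain ⟨hv0, hv1⟩ := hv
  unfold binaryPIT
  split_ifs
  · exact ⟨by positivity, mul_le_one₀ hv1 hx0 hx1⟩
  · constructor <;> nlinarith

theorem measurable_binaryPIT : Measurable fun q : (ℝ × ℝ) × ℝ => binaryPIT q.1.1 q.1.2 q.2 :=
  Measurable.ite (measurable_fst.snd (measurableSet_singleton 0)) (by fun_prop) (by fun_prop)

theorem integral_Icc_zero_one_binaryPIT_pow (x y : ℝ) (n : ℕ) :
    (n + 1) * ∫ v in Icc (0 : ℝ) 1, binaryPIT x y v ^ n
      = 1 - ∑ k ∈ range n, ((if y = 0 then 1 else 0) * x ^ k - x * x ^ k) := by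
  unfold binaryPIT
  split_ifs with hy
  · simp_rw [mul_pow, integral_mul_const, integral_Icc_zero_one_pow, one_mul, ← pow_succ']
    rw [Finset.sum_range_sub' (fun k => x ^ k) n]
    field_simp
    ring
  · simp_rw [zero_mul, zero_sub, Finset.sum_neg_distrib, sub_neg_eq_add,
      integral_Icc_zero_one_add_mul_sub_pow, Finset.sum_range_succ', ← pow_succ']
    ring

theorem integral_binaryPIT_pow {Ω : Type*} [MeasurableSpace Ω] {Q : Measure Ω}
    [IsProbabilityMeasure Q] {Y p V : Ω → ℝ} (hY : Measurable Y) (hp : Measurable p)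
    (hV : Measurable V) (hp01 : ∀ ω, p ω ∈ Icc (0 : ℝ) 1)
    (hVunif : Q.map V = volume.restrict (Icc (0 : ℝ) 1))
    (hindep : IndepFun V (fun ω => (p ω, Y ω)) Q) (n : ℕ) :
    (n + 1) * ∫ ω, binaryPIT (p ω) (Y ω) (V ω) ^ n ∂Q
      = 1 - ∑ k ∈ range n,
          (∫ ω, (if Y ω = 0 then 1 else 0) * p ω ^ k ∂Q - ∫ ω, p ω * p ω ^ k ∂Q) := by
  have hV01 : ∀ᵐ ω ∂Q, V ω ∈ Icc (0 : ℝ) 1 :=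
    ae_of_ae_map hV.aemeasurable (hVunif ▸ ae_restrict_mem measurableSet_Icc)
  have hint : ∀ f : Ω → ℝ, Measurable f → (∀ᵐ ω ∂Q, f ω ∈ Icc (0 : ℝ) 1) → Integrable f Q :=
    fun f hf hf01 => Integrable.of_mem_Icc 0 1 hf.aemeasurable hf01
  have hpow : ∀ {x : ℝ}, x ∈ Icc (0 : ℝ) 1 → ∀ k : ℕ, x ^ k ∈ Icc (0 : ℝ) 1 := fun hx k =>
    ⟨pow_nonneg hx.1 k, pow_le_one₀ hx.1 hx.2⟩
  have hWint : ∀ k : ℕ, Integrable (fun ω => (if Y ω = 0 then 1 else 0) * p ω ^ k) Q := fun k =>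
    hint _ ((Measurable.ite (hY (measurableSet_singleton 0)) measurable_const
      measurable_const).mul (hp.pow_const k)) (ae_of_all _ fun ω => unitInterval.mul_mem
      (by split_ifs <;> simp) (hpow (hp01 ω) k))
  have hpint : ∀ k : ℕ, Integrable (fun ω => p ω * p ω ^ k) Q := fun k =>
    hint _ (by fun_prop) (ae_of_all _ fun ω => unitInterval.mul_mem (hp01 ω) (hpow (hp01 ω) k))
  have hPITint : Integrable (fun ω => binaryPIT (p ω) (Y ω) (V ω) ^ n) Q :=
    hint _ ((measurable_binaryPIT.comp ((hp.prodMk hY).prodMk hV)).pow_const n) <| by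
      filter_upwards [hV01] with ω hω
      exact hpow (binaryPIT_mem_Icc (hp01 ω) hω _) n
  calc (n + 1) * ∫ ω, binaryPIT (p ω) (Y ω) (V ω) ^ n ∂Q
      = ∫ ω, (n + 1) * (∫ v in Icc (0 : ℝ) 1, binaryPIT (p ω) (Y ω) v ^ n) ∂Q := by
        rw [hindep.symm.integral_comp_eq_integral_integral (X := fun ω => (p ω, Y ω))
          (φ := fun q => binaryPIT q.1.1 q.1.2 q.2 ^ n) (by fun_prop) hV
          (measurable_binaryPIT.pow_const n) hPITint, hVunif, integral_const_mul]
    _ = ∫ ω, 1 - ∑ k ∈ range n, ((if Y ω = 0 then 1 else 0) * p ω ^ k - p ω * p ω ^ k) ∂Q := by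
        simp_rw [integral_Icc_zero_one_binaryPIT_pow]
    _ = _ := by
        have hterm : ∀ k ∈ range n, Integrable
            (fun ω => (if Y ω = 0 then 1 else 0) * p ω ^ k - p ω * p ω ^ k) Q :=
          fun k _ => (hWint k).sub (hpint k)
        rw [integral_sub (integrable_const 1) (integrable_finsetSum _ hterm),
          integral_finsetSum _ hterm, integral_const, probReal_univ, one_smul]
        simp_rw [integral_sub (hWint _) (hpint _)]

theorem map_binaryPIT_eq_volume_restrict_iff {Ω : Type*} [MeasurableSpace Ω] {Q : Measure Ω}
    [IsProbabilityMeasure Q] {Y p V : Ω → ℝ} (hY : Measurable Y) (hp : Measurable p)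
    (hV : Measurable V) (hp01 : ∀ ω, p ω ∈ Icc (0 : ℝ) 1)
    (hVunif : Q.map V = volume.restrict (Icc (0 : ℝ) 1))
    (hindep : IndepFun V (fun ω => (p ω, Y ω)) Q) :
    Q.map (fun ω => binaryPIT (p ω) (Y ω) (V ω)) = volume.restrict (Icc 0 1) ↔
      weightedLaw Q (fun ω => if Y ω = 0 then 1 else 0) p = weightedLaw Q p p := by
  set Z := fun ω => binaryPIT (p ω) (Y ω) (V ω)
  set W : Ω → ℝ := fun ω => if Y ω = 0 then 1 else 0
  have hWmeas : Measurable W :=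
    Measurable.ite (hY (measurableSet_singleton 0)) measurable_const measurable_const
  have hW01 : ∀ ω, W ω ∈ Icc (0 : ℝ) 1 := fun ω => by by_cases h : Y ω = 0 <;> simp [W, h]
  have hW0 : 0 ≤ W := fun ω => (hW01 ω).1
  have hZmeas : Measurable Z := measurable_binaryPIT.comp ((hp.prodMk hY).prodMk hV)
  have hZlaw : ∀ᵐ x ∂Q.map Z, x ∈ Icc (0 : ℝ) 1 := by
    refine (ae_map_iff hZmeas.aemeasurable measurableSet_Icc).2 ?_
    filter_upwards [ae_of_ae_map hV.aemeasurable (hVunif ▸ ae_restrict_mem measurableSet_Icc)]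
      with ω hω
    exact binaryPIT_mem_Icc (hp01 ω) hω _
  have := isFiniteMeasure_weightedLaw (Q := Q) (p := p)
    (Integrable.of_mem_Icc 0 1 hWmeas.aemeasurable (ae_of_all _ hW01))
  have := isFiniteMeasure_weightedLaw (Q := Q) (p := p)
    (Integrable.of_mem_Icc 0 1 hp.aemeasurable (ae_of_all _ hp01))
  have hmoment : ∀ n : ℕ, (n + 1) * ∫ x, x ^ n ∂Q.map Z
      = 1 - ∑ k ∈ range n, (∫ x, x ^ k ∂weightedLaw Q W p - ∫ x, x ^ k ∂weightedLaw Q p p) := by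
    intro n
    rw [integral_map hZmeas.aemeasurable (continuous_pow n).aestronglyMeasurable,
      integral_binaryPIT_pow hY hp hV hp01 hVunif hindep]
    simp_rw [integral_weightedLaw hWmeas hW0 hp (continuous_pow _).measurable,
      integral_weightedLaw hp (fun ω => (hp01 ω).1) hp (continuous_pow _).measurable]
    rfl
  rw [eq_volume_restrict_Icc_zero_one_iff hZlaw]
  simp_rw [hmoment, sub_eq_self, Finset.forall_sum_range_eq_zero_iff, sub_eq_zero]
  exact ⟨Measure.ext_of_forall_integral_pow_eq (ae_weightedLaw_mem hp measurableSet_Icc hp01)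
    (ae_weightedLaw_mem hp measurableSet_Icc hp01), fun h n => h ▸ rfl⟩

theorem binary_probabilistic_calibration_iff_conditional_calibration_general
    {Ω : Type*} [MeasurableSpace Ω] (Q : Measure Ω) [IsProbabilityMeasure Q]
    (Y p V : Ω → ℝ)
    (hYmeas : Measurable Y) (hpmeas : Measurable p) (hVmeas : Measurable V)
    (hpval : ∀ ω, p ω ∈ Set.Icc (0 : ℝ) 1)
    (hVunif : Q.map V = volume.restrict (Set.Icc (0 : ℝ) 1))
    (hindep : IndepFun V (fun ω => (p ω, Y ω)) Q)
    (Z : Ω → ℝ)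
    (hZ : Z = fun ω => if Y ω = 0 then V ω * p ω else p ω + V ω * (1 - p ω)) :
    Q.map Z = volume.restrict (Set.Icc (0 : ℝ) 1) ↔
      Q[(fun ω => if Y ω = 0 then (1 : ℝ) else 0) |
          MeasurableSpace.comap p Real.measurableSpace] =ᵐ[Q] p := by
  set W : Ω → ℝ := fun ω => if Y ω = 0 then 1 else 0
  have hW01 : ∀ ω, W ω ∈ Icc (0 : ℝ) 1 := fun ω => by by_cases h : Y ω = 0 <;> simp [W, h]
  have hWint : Integrable W Q :=
    Integrable.of_mem_Icc 0 1 (Measurable.ite (hYmeas (measurableSet_singleton 0))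
      measurable_const measurable_const).aemeasurable (ae_of_all _ hW01)
  have hpint : Integrable p Q := Integrable.of_mem_Icc 0 1 hpmeas.aemeasurable (ae_of_all _ hpval)
  have hZ' : Z = fun ω => binaryPIT (p ω) (Y ω) (V ω) := hZ
  calc Q.map Z = volume.restrict (Icc 0 1) ↔ weightedLaw Q W p = weightedLaw Q p p := by
        rw [hZ']
        exact map_binaryPIT_eq_volume_restrict_iff hYmeas hpmeas hVmeas hpval hVunif hindep
    _ ↔ ∀ B, MeasurableSet B → ∫ ω in p ⁻¹' B, W ω ∂Q = ∫ ω in p ⁻¹' B, p ω ∂Q :=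
        weightedLaw_eq_weightedLaw_iff hWint hpint (fun ω => (hW01 ω).1) (fun ω => (hpval ω).1)
          hpmeas
    _ ↔ Q[W | MeasurableSpace.comap p Real.measurableSpace] =ᵐ[Q] p :=
        (condExp_comap_ae_eq_iff hpmeas hWint hpint (comap_measurable p).stronglyMeasurable).symm

/-- **Theorem 7 of Gneiting–Ranjan.** For a binary outcome `Y ∈ {0,1}`
(success identified with `Y = 0`), a probability forecast `p ∈ [0,1]`, and an auxiliary
uniform randomization variable `V` independent of `(p, Y)`, the randomized probability
integral transform `Z = V·p` on `{Y = 0}` and `Z = p + V·(1 − p)` on `{Y = 1}` is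
uniformly distributed on `[0,1]` if and only if `Q(Y = 0 | σ(p)) = p` almost surely:
probabilistic calibration and conditional calibration are equivalent. -/
theorem binary_probabilistic_calibration_iff_conditional_calibration
    {Ω : Type*} [MeasurableSpace Ω] (Q : Measure Ω) [IsProbabilityMeasure Q]
    (Y p V : Ω → ℝ)
    (hYmeas : Measurable Y) (hpmeas : Measurable p) (hVmeas : Measurable V)
    (hYval : ∀ᵐ ω ∂Q, Y ω = 0 ∨ Y ω = 1)
    (hpval : ∀ ω, p ω ∈ Set.Icc (0 : ℝ) 1)
    (hVunif : Q.map V = volume.restrict (Set.Icc (0 : ℝ) 1))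
    (hindep : IndepFun V (fun ω => (p ω, Y ω)) Q)
    (Z : Ω → ℝ)
    (hZ : Z = fun ω => if Y ω = 0 then V ω * p ω else p ω + V ω * (1 - p ω)) :
    Q.map Z = volume.restrict (Set.Icc (0 : ℝ) 1) ↔
      Q[(fun ω => if Y ω = 0 then (1 : ℝ) else 0) |
          MeasurableSpace.comap p Real.measurableSpace] =ᵐ[Q] p :=
  binary_probabilistic_calibration_iff_conditional_calibration_general Q Y p V hYmeas hpmeas hVmeas
    hpval hVunif hindep Z hZ
end

section
/- Let (Ω, 𝒜, Q) be a standard Borel probability space, let 𝒜₀ ⊆ 𝒜 be a sub-σ-algebra, let Y be a real-valued random variable, and let V be uniformly distributed on [0,1] and independent of the σ-algebra generated by 𝒜₀ and Y. Let ω ↦ κ_ω be a regular conditional distribution of Y given 𝒜₀, i.e., an 𝒜₀-measurable family of Borel probability measures on ℝ such that for every Borel set B ⊆ ℝ, κ_·(B) = Q(Y ∈ B | 𝒜₀) almost surely. Then: (a) for every y ∈ ℝ, E_Q[κ_·((−∞, y])] = Q(Y ≤ y); and (b) the random variable Z(ω) = κ_ω((−∞, Y(ω))) + V(ω)·κ_ω({Y(ω)})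 is uniformly distributed on [0,1]. -/
/-!
Conditionally on `𝒜₀`, `Y` has law `κ_ω` and `V` is uniform and independent of it, so the joint
law of `(ω, Y, V)` on `(Ω, 𝒜₀) × ℝ × ℝ` is `Q|𝒜₀ ⊗ κ ⊗ U[0,1]`, and the law of `Z` is the
`Q`-mixture over `ω` of the laws of the randomized PIT `F(y-) + v μ{y}` of independent
`y ~ μ = κ_ω` and `v ~ U[0,1]`. Each of these laws is uniform: if `c` is a `t`-quantile of `μ`,
then `Z ≤ t` holds surely when `y < c`, with probability `(t - F(c-)) / μ{c}` when `y = c`, and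
almost never when `y > c`, because `μ`-almost every point is a point of strict increase of `F`
from the left; the contributions add up to `F(c-) + (t - F(c-)) = t`.
Marginal calibration is the tower property of conditional expectation.
-/

open MeasureTheory ProbabilityTheory Set Filter Topology

local notation "U₀₁" => volume.restrict (Icc (0 : ℝ) 1)

lemma Iic_inter_Icc {α : Type*} [LinearOrder α] {t a b : α} :
    Iic t ∩ Icc a b = Icc a (min t b) := by
  rw [← Ici_inter_Iic, inter_left_comm, Iic_inter_Iic, Ici_inter_Iic, min_comm]

lemma measure_eq_zero_of_forall_measure_inter_Iic_eq_zero {α : Type*} [LinearOrder α]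
    [TopologicalSpace α] [OrderTopology α] [SecondCountableTopology α] [MeasurableSpace α]
    {μ : Measure α} {S : Set α} (h : ∀ y ∈ S, μ (S ∩ Iic y) = 0) : μ S = 0 := by
  obtain ⟨T, hTS, hTc, hTU⟩ :=
    TopologicalSpace.isOpen_biUnion_countable S Iio fun _ _ => isOpen_Iio
  by_cases hS : S ⊆ ⋃ y ∈ S, Iio y
  · rw [← hTU] at hS
    refine measure_mono_null (fun x hx => ?_)
      ((measure_biUnion_null_iff hTc).2 fun y hy => h y (hTS hy))
    obtain ⟨y, hy, hxy⟩ := mem_iUnion₂.1 (hS hx)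
    exact mem_iUnion₂.2 ⟨y, hy, hx, le_of_lt hxy⟩
  · -- a point of `S` outside `⋃ y ∈ S, Iio y` is the maximum of `S`
    obtain ⟨y, hyS, hy⟩ := not_subset.1 hS
    have hSy : S ⊆ Iic y := fun x hx => not_lt.1 fun hlt => hy (mem_iUnion₂.2 ⟨x, hx, hlt⟩)
    rw [← inter_eq_left.2 hSy]
    exact h y hyS

lemma ae_forall_lt_measureReal_Iic_lt (μ : Measure ℝ) [IsFiniteMeasure μ] :
    ∀ᵐ y ∂μ, ∀ x < y, μ.real (Iic x) < μ.real (Iic y) := by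
  have hflat : ∀ q : ℚ, μ {y | (q : ℝ) < y ∧ μ (Ioc (q : ℝ) y) = 0} = 0 := fun q =>
    measure_eq_zero_of_forall_measure_inter_Iic_eq_zero fun y hy =>
      measure_mono_null (fun z hz => (⟨hz.1.1, hz.2⟩ : z ∈ Ioc (q : ℝ) y)) hy.2
  refine ae_iff.2 (measure_mono_null (fun y hy => ?_) (measure_iUnion_null hflat))
  push Not at hy
  obtain ⟨x, hxy, hle⟩ := hy
  obtain ⟨q, hxq, hqy⟩ := exists_rat_btwn hxy
  have hsplit : μ.real (Iic y) = μ.real (Iic (q : ℝ)) + μ.real (Ioc (q : ℝ) y) := by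
    rw [← measureReal_union (Iic_disjoint_Ioc le_rfl) measurableSet_Ioc,
      Iic_union_Ioc_eq_Iic hqy.le]
  have hmono : μ.real (Iic x) ≤ μ.real (Iic (q : ℝ)) :=
    measureReal_mono (Iic_subset_Iic.2 hxq.le)
  refine mem_iUnion.2 ⟨q, hqy, (measureReal_eq_zero_iff).1 ?_⟩
  linarith [measureReal_nonneg (μ := μ) (s := Ioc (q : ℝ) y)]

lemma measureReal_Iic_eq_measureReal_Iio_add {α : Type*} [LinearOrder α] [MeasurableSpace α]
    [MeasurableSingletonClass α] (μ : Measure α) [IsFiniteMeasure μ] (y : α) :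
    μ.real (Iic y) = μ.real (Iio y) + μ.real {y} := by
  rw [← Iio_union_right, measureReal_union (by simp) (measurableSet_singleton y)]

lemma exists_quantile (μ : Measure ℝ) [IsProbabilityMeasure μ] {t : ℝ} (ht0 : 0 < t)
    (ht1 : t < 1) :
    ∃ c, (∀ y < c, μ.real (Iic y) < t) ∧ μ.real (Iio c) ≤ t ∧ t ≤ μ.real (Iic c) := by
  set F := cdf μ
  have hF : ∀ y, μ.real (Iic y) = F y := fun y => (cdf_eq_real μ y).symm
  set A := {y | t ≤ F y}
  have hA : A.Nonempty := ((tendsto_cdf_atTop μ).eventually (eventually_ge_nhds ht1)).exists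
  have hAbdd : BddBelow A := by
    obtain ⟨x, hx⟩ := ((tendsto_cdf_atBot μ).eventually (eventually_lt_nhds ht0)).exists
    exact ⟨x, fun y hy => le_of_not_gt fun hyx => (hx.trans_le hy).not_ge (F.mono hyx.le)⟩
  have hlt : ∀ y < sInf A, F y < t := fun y hy => not_le.1 fun h => (csInf_le hAbdd h).not_gt hy
  refine ⟨sInf A, fun y hy => hF y ▸ hlt y hy, ?_, ?_⟩
  · have hIio : μ (Iio (sInf A)) = ENNReal.ofReal (Function.leftLim F (sInf A)) := by
      rw [← measure_cdf μ, StieltjesFunction.measure_Iio _ (tendsto_cdf_atBot μ), sub_zero]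
    rw [Measure.real, hIio, ENNReal.toReal_ofReal', F.mono.leftLim_eq_sSup]
    exact max_le (csSup_le (nonempty_Iio.image _) (forall_mem_image.2 fun y hy => (hlt y hy).le))
      ht0.le
  · rw [hF]
    refine ge_of_tendsto ((F.right_continuous _).mono Ioi_subset_Ici_self)
      (eventually_nhdsWithin_of_forall fun y hy => ?_)
    obtain ⟨a, ha, hay⟩ := exists_lt_of_csInf_lt hA hy
    exact ha.trans (F.mono hay.le)

section UniformSlices

variable {a b t : ℝ}

lemma restrict_Icc_setOf_add_mul_le_eq_one (hb : 0 ≤ b) (h : a + b ≤ t) :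
    U₀₁ {v | a + v * b ≤ t} = 1 := by
  have hsub : Icc (0 : ℝ) 1 ⊆ {v | a + v * b ≤ t} := fun v hv => by
    change a + v * b ≤ t
    nlinarith [hv.1, hv.2]
  rw [Measure.restrict_apply' measurableSet_Icc, inter_eq_right.2 hsub, Real.volume_Icc]
  simp

lemma restrict_Icc_setOf_add_mul_le_eq_zero (hb : 0 ≤ b) (ha : t ≤ a) (hab : t < a + b) :
    U₀₁ {v | a + v * b ≤ t} = 0 := by
  rw [Measure.restrict_apply' measurableSet_Icc]
  refine measure_mono_null (fun v hv => ?_) (measure_singleton (0 : ℝ))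
  obtain ⟨hle, hv0, -⟩ := hv
  change a + v * b ≤ t at hle
  have hvb : v * b = 0 := le_antisymm (by linarith) (mul_nonneg hv0 hb)
  exact (mul_eq_zero.1 hvb).resolve_right (by linarith)

lemma ofReal_mul_restrict_Icc_setOf_add_mul_le (hb : 0 ≤ b) (ha : a ≤ t) (hab : t ≤ a + b) :
    ENNReal.ofReal b * U₀₁ {v | a + v * b ≤ t} = ENNReal.ofReal (t - a) := by
  rcases hb.eq_or_lt with rfl | hb
  · simp [show t = a by linarith]
  have hset : {v | a + v * b ≤ t} ∩ Icc 0 1 = Icc 0 ((t - a) / b) := by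
    ext v
    simp only [mem_inter_iff, mem_ofPred_eq, mem_Icc, le_div_iff₀ hb]
    constructor
    · rintro ⟨h, h0, -⟩
      exact ⟨h0, by linarith⟩
    · rintro ⟨h0, h⟩
      exact ⟨by linarith, h0, by nlinarith⟩
  rw [Measure.restrict_apply' measurableSet_Icc, hset, Real.volume_Icc, sub_zero,
    ← ENNReal.ofReal_mul hb.le, mul_div_cancel₀ _ hb.ne']

end UniformSlices

noncomputable def randomizedPIT (μ : Measure ℝ) (y v : ℝ) : ℝ := μ.real (Iio y) + v * μ.real {y}

lemma measurable_randomizedPIT {α : Type*} {mα : MeasurableSpace α} (K : Kernel α ℝ)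
    [IsSFiniteKernel K] :
    Measurable fun p : (α × ℝ) × ℝ => randomizedPIT (K p.1.1) p.1.2 p.2 := by
  have hIio : Measurable fun p : α × ℝ => K p.1 (Iio p.2) :=
    (K.prodMkRight ℝ).measurable_kernel_prodMk_left
      (measurableSet_lt measurable_snd measurable_fst.snd)
  have hatom : Measurable fun p : α × ℝ => K p.1 {p.2} :=
    (K.prodMkRight ℝ).measurable_kernel_prodMk_left
      (measurableSet_eq_fun measurable_snd measurable_fst.snd)
  exact (hIio.ennreal_toReal.comp measurable_fst).add
    (measurable_snd.mul (hatom.ennreal_toReal.comp measurable_fst))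

lemma lintegral_restrict_Icc_setOf_randomizedPIT_le_of_quantile (μ : Measure ℝ)
    [IsProbabilityMeasure μ] {t c : ℝ} (hlt : ∀ y < c, μ.real (Iic y) < t)
    (hIio : μ.real (Iio c) ≤ t) (hIic : t ≤ μ.real (Iic c)) :
    ∫⁻ y, U₀₁ {v | randomizedPIT μ y v ≤ t} ∂μ = ENNReal.ofReal t := by
  have hatom : ∀ y, μ.real (Iio y) + μ.real {y} = μ.real (Iic y) := fun y =>
    (measureReal_Iic_eq_measureReal_Iio_add μ y).symm
  have hbelow : ∫⁻ y in Iio c, U₀₁ {v | randomizedPIT μ y v ≤ t} ∂μ = μ (Iio c) :=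
    (setLIntegral_congr_fun measurableSet_Iio fun y hy =>
      restrict_Icc_setOf_add_mul_le_eq_one measureReal_nonneg
        (by rw [hatom]; exact (hlt y hy).le)).trans (setLIntegral_one _)
  have hat : ∫⁻ y in {c}, U₀₁ {v | randomizedPIT μ y v ≤ t} ∂μ
      = ENNReal.ofReal (t - μ.real (Iio c)) := by
    rw [lintegral_singleton, mul_comm, ← ofReal_measureReal (μ := μ) (s := {c})]
    exact ofReal_mul_restrict_Icc_setOf_add_mul_le measureReal_nonneg hIio
      (by rw [hatom]; exact hIic)
  have habove : ∫⁻ y in Ioi c, U₀₁ {v | randomizedPIT μ y v ≤ t} ∂μ = 0 := by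
    refine (setLIntegral_congr_fun_ae (g := 0) measurableSet_Ioi ?_).trans lintegral_zero
    filter_upwards [ae_forall_lt_measureReal_Iic_lt μ] with y hy hcy
    refine restrict_Icc_setOf_add_mul_le_eq_zero measureReal_nonneg
      (hIic.trans (measureReal_mono (Iic_subset_Iio.2 hcy))) ?_
    rw [hatom]
    exact hIic.trans_lt (hy c hcy)
  rw [← setLIntegral_univ, ← Iic_union_Ioi (a := c), ← Iio_union_right,
    lintegral_union measurableSet_Ioi (by simp),
    lintegral_union (measurableSet_singleton c) (by simp), hbelow, hat, habove, add_zero,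
    ← ofReal_measureReal, ← ENNReal.ofReal_add measureReal_nonneg (sub_nonneg.2 hIio),
    add_sub_cancel]

lemma lintegral_restrict_Icc_setOf_randomizedPIT_le (μ : Measure ℝ) [IsProbabilityMeasure μ]
    (t : ℝ) : ∫⁻ y, U₀₁ {v | randomizedPIT μ y v ≤ t} ∂μ = ENNReal.ofReal (min t 1) := by
  rcases le_or_gt t 0 with ht0 | ht0
  · have hzero : ∀ᵐ y ∂μ, U₀₁ {v | randomizedPIT μ y v ≤ t} = 0 := by
      filter_upwards [ae_forall_lt_measureReal_Iic_lt μ] with y hy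
      refine restrict_Icc_setOf_add_mul_le_eq_zero measureReal_nonneg
        (ht0.trans measureReal_nonneg) ?_
      rw [← measureReal_Iic_eq_measureReal_Iio_add]
      exact ht0.trans_lt (measureReal_nonneg.trans_lt (hy (y - 1) (by linarith)))
    rw [lintegral_congr_ae hzero, lintegral_zero, ENNReal.ofReal_of_nonpos (by simp [ht0])]
  rcases le_or_gt 1 t with ht1 | ht1
  · have hone : ∀ y, U₀₁ {v | randomizedPIT μ y v ≤ t} = 1 := fun y =>
      restrict_Icc_setOf_add_mul_le_eq_one measureReal_nonneg
        (by rw [← measureReal_Iic_eq_measureReal_Iio_add]; exact measureReal_le_one.trans ht1)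
    simp [hone, min_eq_right ht1]
  obtain ⟨c, hlt, hIio, hIic⟩ := exists_quantile μ ht0 ht1
  rw [min_eq_left ht1.le]
  exact lintegral_restrict_Icc_setOf_randomizedPIT_le_of_quantile μ hlt hIio hIic

theorem map_prod_randomizedPIT (μ : Measure ℝ) [IsProbabilityMeasure μ] :
    (μ.prod U₀₁).map (fun p => randomizedPIT μ p.1 p.2) = U₀₁ := by
  have hmeas : Measurable fun p : ℝ × ℝ => randomizedPIT μ p.1 p.2 :=
    (measurable_randomizedPIT (Kernel.const Unit μ)).comp
      (((measurable_const (a := ())).prodMk measurable_fst).prodMk measurable_snd)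
  refine Measure.ext_of_Iic _ _ fun t => ?_
  rw [Measure.map_apply hmeas measurableSet_Iic, Measure.prod_apply (hmeas measurableSet_Iic),
    Measure.restrict_apply measurableSet_Iic, Iic_inter_Icc, Real.volume_Icc, sub_zero]
  exact lintegral_restrict_Icc_setOf_randomizedPIT_le μ t

lemma map_compProd_prod_eq {α β γ δ : Type*} {mα : MeasurableSpace α} {mβ : MeasurableSpace β}
    {mγ : MeasurableSpace γ} {mδ : MeasurableSpace δ} {μ : Measure α} [IsProbabilityMeasure μ]
    {K : Kernel α β} [IsSFiniteKernel K] {ν : Measure γ} [SFinite ν] {G : (α × β) × γ → δ}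
    (hG : Measurable G) {ρ : Measure δ}
    (hρ : ∀ a, ((K a).prod ν).map (fun p => G ((a, p.1), p.2)) = ρ) :
    ((μ ⊗ₘ K).prod ν).map G = ρ := by
  ext s hs
  have hslice : ∀ a, ∫⁻ b, ν (Prod.mk (a, b) ⁻¹' (G ⁻¹' s)) ∂(K a) = ρ s := fun a => by
    have hGa : Measurable fun p : β × γ => G ((a, p.1), p.2) := by fun_prop
    rw [← hρ a, Measure.map_apply hGa hs, Measure.prod_apply (hGa hs)]
    rfl
  rw [Measure.map_apply hG hs, Measure.prod_apply (hG hs),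
    Measure.lintegral_compProd (measurable_measure_prodMk_left (hG hs))]
  simp [hslice]

section Disintegration

variable {Ω β γ δ : Type*} {m0 : MeasurableSpace Ω} [m : MeasurableSpace Ω]
  [mβ : MeasurableSpace β] [mγ : MeasurableSpace γ] [MeasurableSpace δ]
  {Q : Measure Ω} {Y : Ω → β}

lemma setIntegral_toReal_eq_measureReal_inter (hm : m0 ≤ m) [IsFiniteMeasure Q]
    (hY : Measurable Y) (K : Kernel[m0] Ω β) {B : Set β} (hB : MeasurableSet B)
    (hcond : (fun ω => (K ω B).toReal) =ᵐ[Q] Q[Set.indicator (Y ⁻¹' B) (fun _ => (1 : ℝ)) | m0])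
    {A : Set Ω} (hA : MeasurableSet[m0] A) :
    ∫ ω in A, (K ω B).toReal ∂Q = Q.real (A ∩ Y ⁻¹' B) := by
  calc ∫ ω in A, (K ω B).toReal ∂Q
      = ∫ ω in A, (Q[Set.indicator (Y ⁻¹' B) (fun _ => (1 : ℝ)) | m0]) ω ∂Q :=
        setIntegral_congr_ae (hm A hA) (hcond.mono fun _ h _ => h)
    _ = ∫ ω in A, Set.indicator (Y ⁻¹' B) (fun _ => (1 : ℝ)) ω ∂Q :=
        setIntegral_condExp hm ((integrable_const 1).indicator (hY hB)) hA
    _ = Q.real (A ∩ Y ⁻¹' B) := by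
        rw [integral_indicator_const _ (hY hB), measureReal_restrict_apply (hY hB), inter_comm,
          smul_eq_mul, mul_one]

lemma measure_inter_preimage_eq_setLIntegral (hm : m0 ≤ m) [IsFiniteMeasure Q]
    (hY : Measurable Y) (K : Kernel[m0] Ω β) [IsFiniteKernel K] {B : Set β}
    (hB : MeasurableSet B)
    (hcond : (fun ω => (K ω B).toReal) =ᵐ[Q] Q[Set.indicator (Y ⁻¹' B) (fun _ => (1 : ℝ)) | m0])
    {A : Set Ω} (hA : MeasurableSet[m0] A) :
    Q (A ∩ Y ⁻¹' B) = ∫⁻ ω in A, K ω B ∂Q := by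
  have hint : Integrable (fun ω => (K ω B).toReal) (Q.restrict A) :=
    (integrable_condExp.congr hcond.symm).restrict
  rw [← ofReal_measureReal, ← setIntegral_toReal_eq_measureReal_inter hm hY K hB hcond hA,
    ofReal_integral_eq_lintegral_ofReal hint (ae_of_all _ fun _ => ENNReal.toReal_nonneg)]
  simp_rw [ENNReal.ofReal_toReal (measure_ne_top _ _)]

lemma map_prodMk_eq_trim_compProd (hm : m0 ≤ m) [IsFiniteMeasure Q] (hY : Measurable Y)
    (K : Kernel[m0] Ω β) [IsSFiniteKernel K]
    (hK : ∀ A, MeasurableSet[m0] A → ∀ B, MeasurableSet B →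
      Q (A ∩ Y ⁻¹' B) = ∫⁻ ω in A, K ω B ∂Q) :
    @Measure.map Ω (Ω × β) m (m0.prod mβ) (fun ω => (ω, Y ω)) Q = Q.trim hm ⊗ₘ K := by
  have hT : @Measurable Ω (Ω × β) m (m0.prod mβ) (fun ω => (ω, Y ω)) :=
    (measurable_id.mono le_rfl hm).prodMk hY
  refine Measure.ext_prod fun {A B} hA hB => ?_
  rw [Measure.map_apply hT (hA.prod hB), Measure.compProd_apply_prod hA hB,
    setLIntegral_trim hm (K.measurable_coe hB) hA]
  exact hK A hA B hB

lemma map_eq_of_forall_map_prod_eq (hm : m0 ≤ m) [IsProbabilityMeasure Q] (hY : Measurable Y)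
    {V : Ω → γ} (hV : Measurable V) (hindep : Indep (mγ.comap V) (m0 ⊔ mβ.comap Y) Q)
    (K : Kernel[m0] Ω β) [IsSFiniteKernel K]
    (hK : ∀ A, MeasurableSet[m0] A → ∀ B, MeasurableSet B →
      Q (A ∩ Y ⁻¹' B) = ∫⁻ ω in A, K ω B ∂Q)
    {G : (Ω × β) × γ → δ} (hG : Measurable[(m0.prod mβ).prod mγ] G) {ρ : Measure δ}
    (hρ : ∀ ω, ((K ω).prod (Q.map V)).map (fun p => G ((ω, p.1), p.2)) = ρ) :
    Q.map (fun ω => G ((ω, Y ω), V ω)) = ρ := by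
  have hT : @Measurable Ω (Ω × β) (m0 ⊔ mβ.comap Y) (m0.prod mβ) (fun ω => (ω, Y ω)) :=
    (measurable_id.mono le_sup_left le_rfl).prodMk (comap_measurable Y |>.mono le_sup_right le_rfl)
  have hTm : @Measurable Ω (Ω × β) m (m0.prod mβ) (fun ω => (ω, Y ω)) :=
    hT.mono (sup_le hm hY.comap_le) le_rfl
  have hTV : @IndepFun Ω (Ω × β) γ m (m0.prod mβ) mγ (fun ω => (ω, Y ω)) V Q := by
    rw [IndepFun_iff_Indep (mβ := m0.prod mβ)]
    exact indep_of_indep_of_le_left hindep.symm hT.comap_le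
  have hjoint := (indepFun_iff_map_prod_eq_prod_map_map (mβ := m0.prod mβ)
    ⟨_, hTm, ae_eq_refl _⟩ hV.aemeasurable).1 hTV
  rw [map_prodMk_eq_trim_compProd hm hY K hK] at hjoint
  have : IsProbabilityMeasure (Q.trim hm) :=
    ⟨by rw [trim_measurableSet_eq hm (@MeasurableSet.univ Ω m0), measure_univ]⟩
  rw [← map_compProd_prod_eq (μ := Q.trim hm) hG hρ, ← hjoint,
    Measure.map_map hG (hTm.prodMk hV)]
  rfl

end Disintegration

theorem ideal_forecast_marginally_and_probabilistically_calibrated_general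
    {Ω : Type*} (m0 : MeasurableSpace Ω) [m : MeasurableSpace Ω]
    (Q : Measure Ω) [IsProbabilityMeasure Q]
    (hm0 : m0 ≤ m)
    (Y V : Ω → ℝ) (hYmeas : Measurable Y) (hVmeas : Measurable V)
    (hVunif : Q.map V = volume.restrict (Set.Icc (0 : ℝ) 1))
    (hindep : Indep (MeasurableSpace.comap V Real.measurableSpace)
      (m0 ⊔ MeasurableSpace.comap Y Real.measurableSpace) Q)
    (κ : Ω → Measure ℝ) (hκprob : ∀ ω, IsProbabilityMeasure (κ ω))
    (hκmeas : ∀ B : Set ℝ, MeasurableSet B → Measurable[m0] fun ω => κ ω B)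
    (hκcond : ∀ B : Set ℝ, MeasurableSet B →
      (fun ω => (κ ω B).toReal) =ᵐ[Q]
        Q[Set.indicator (Y ⁻¹' B) (fun _ => (1 : ℝ)) | m0]) :
    (∀ y : ℝ, ∫ ω, (κ ω (Set.Iic y)).toReal ∂Q = (Q {ω | Y ω ≤ y}).toReal) ∧
      Q.map (fun ω => (κ ω (Set.Iio (Y ω))).toReal + V ω * (κ ω {Y ω}).toReal) =
        volume.restrict (Set.Icc (0 : ℝ) 1) := by
  obtain ⟨K, rfl⟩ : ∃ K : Kernel[m0] Ω ℝ, ⇑K = κ :=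
    ⟨@Kernel.mk Ω ℝ m0 _ κ (Measure.measurable_of_measurable_coe (mβ := m0) κ hκmeas), rfl⟩
  have : IsMarkovKernel K := ⟨hκprob⟩
  refine ⟨fun y => ?_, ?_⟩
  · have h := setIntegral_toReal_eq_measureReal_inter hm0 hYmeas K (measurableSet_Iic (a := y))
      (hκcond _ measurableSet_Iic) (@MeasurableSet.univ Ω m0)
    rwa [Measure.restrict_univ, univ_inter] at h
  · refine map_eq_of_forall_map_prod_eq hm0 hYmeas hVmeas hindep K
      (fun A hA B hB => measure_inter_preimage_eq_setLIntegral hm0 hYmeas K hB (hκcond B hB) hA)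
      (measurable_randomizedPIT K) fun ω => ?_
    rw [hVunif]
    exact map_prod_randomizedPIT (K ω)

/-- **Theorem 1 of Gneiting–Ranjan.** An ideal forecast — the regular
conditional distribution `κ` of the observation `Y` given a sub-σ-algebra `m0 = 𝒜₀` — is
(a) marginally calibrated: `E_Q[κ_·((−∞, y])] = Q(Y ≤ y)` for every `y`, and
(b) probabilistically calibrated: its randomized probability integral transform
`Z = κ_·((−∞, Y)) + V·κ_·({Y})`, with `V` uniform on `[0,1]` independent of
`σ(𝒜₀, Y)`, is uniformly distributed on `[0,1]`. -/
theorem ideal_forecast_marginally_and_probabilistically_calibrated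
    {Ω : Type*} (m0 : MeasurableSpace Ω) [m : MeasurableSpace Ω] [StandardBorelSpace Ω]
    (Q : Measure Ω) [IsProbabilityMeasure Q]
    (hm0 : m0 ≤ m)
    (Y V : Ω → ℝ) (hYmeas : Measurable Y) (hVmeas : Measurable V)
    (hVunif : Q.map V = volume.restrict (Set.Icc (0 : ℝ) 1))
    (hindep : Indep (MeasurableSpace.comap V Real.measurableSpace)
      (m0 ⊔ MeasurableSpace.comap Y Real.measurableSpace) Q)
    (κ : Ω → Measure ℝ) (hκprob : ∀ ω, IsProbabilityMeasure (κ ω))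
    (hκmeas : ∀ B : Set ℝ, MeasurableSet B → Measurable[m0] fun ω => κ ω B)
    (hκcond : ∀ B : Set ℝ, MeasurableSet B →
      (fun ω => (κ ω B).toReal) =ᵐ[Q]
        Q[Set.indicator (Y ⁻¹' B) (fun _ => (1 : ℝ)) | m0]) :
    (∀ y : ℝ, ∫ ω, (κ ω (Set.Iic y)).toReal ∂Q = (Q {ω | Y ω ≤ y}).toReal) ∧
      Q.map (fun ω => (κ ω (Set.Iio (Y ω))).toReal + V ω * (κ ω {Y ω}).toReal) =
        volume.restrict (Set.Icc (0 : ℝ) 1) :=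
  ideal_forecast_marginally_and_probabilistically_calibrated_general m0 (m := m) Q hm0 Y V hYmeas
    hVmeas hVunif hindep κ hκprob hκmeas hκcond
end

section
/- Let ε be a standard normal random variable, let σ > 0, and let Z_σ = Φ(ε/σ), where Φ is the standard normal cumulative distribution function. Then Var(Z_σ) > 1/12 if σ < 1, Var(Z_σ) = 1/12 if σ = 1, and Var(Z_σ) < 1/12 if σ > 1. -/
/-!
By the symmetry of the standard Gaussian law, `E[Φ(ε/σ)] = 1/2`, so `Var(Φ(ε/σ))` is
`E[(Φ(ε/σ) - 1/2)²]`. The function `x ↦ (Φ x - 1/2)²` is even and strictly increasing in `|x|`,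
so this expectation is strictly decreasing in `σ > 0` (the integrands differ off the null set
`{0}`). At `σ = 1` it equals `∫ φ (Φ - 1/2)² = [(Φ - 1/2)³ / 3]₋∞^∞ = 1/12`.
-/

open MeasureTheory ProbabilityTheory

/-- The standard normal cumulative distribution function `Φ`. -/
noncomputable def stdNormalCDF (x : ℝ) : ℝ :=
  (ProbabilityTheory.gaussianReal 0 1 (Set.Iic x)).toReal

open Set Filter Topology

lemma integral_lt_integral_of_ae_lt {α : Type*} [MeasurableSpace α] {μ : Measure α} [NeZero μ]
    {f g : α → ℝ} (hf : Integrable f μ) (hg : Integrable g μ) (hlt : ∀ᵐ x ∂μ, f x < g x) :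
    ∫ x, f x ∂μ < ∫ x, g x ∂μ := by
  rw [← sub_pos, ← integral_sub hg hf,
    integral_pos_iff_support_of_nonneg_ae (hlt.mono fun x hx => (sub_pos.2 hx).le) (hg.sub hf),
    pos_iff_ne_zero]
  intro hnull
  obtain ⟨x, hx_out, hx_lt⟩ := ((measure_eq_zero_iff_ae_notMem.1 hnull).and hlt).exists
  exact hx_out (sub_ne_zero.2 hx_lt.ne')

lemma integral_eq_half_of_map_neg {μ : Measure ℝ} [IsProbabilityMeasure μ]
    (hμ : μ.map Neg.neg = μ) {g : ℝ → ℝ} (hg : Integrable g μ) (hsymm : ∀ x, g (-x) = 1 - g x) :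
    ∫ x, g x ∂μ = 1 / 2 := by
  have h : ∫ x, g x ∂μ = ∫ x, (1 - g x) ∂μ := by
    conv_lhs => rw [← hμ]
    rw [integral_map measurable_neg.aemeasurable (hμ.symm ▸ hg.aestronglyMeasurable)]
    simp_rw [hsymm]
  rw [integral_sub (integrable_const 1) hg, integral_const, probReal_univ, one_smul] at h
  linarith

lemma gaussianReal_zero_map_neg (v : NNReal) :
    (gaussianReal 0 v).map Neg.neg = gaussianReal 0 v := by
  simpa using gaussianReal_map_neg (μ := 0) (v := v)

lemma continuous_gaussianPDFReal (μ : ℝ) (v : NNReal) : Continuous (gaussianPDFReal μ v) := by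
  unfold gaussianPDFReal
  fun_prop

lemma stdNormalCDF_eq_cdf : stdNormalCDF = cdf (gaussianReal 0 1) :=
  funext fun x => (cdf_eq_real _ x).symm

lemma stdNormalCDF_eq_integral (x : ℝ) :
    stdNormalCDF x = ∫ t in Iic x, gaussianPDFReal 0 1 t := by
  rw [stdNormalCDF, gaussianReal_apply_eq_integral 0 one_ne_zero, ENNReal.toReal_ofReal
    (setIntegral_nonneg measurableSet_Iic fun t _ => gaussianPDFReal_nonneg 0 1 t)]

lemma hasDerivAt_stdNormalCDF (x : ℝ) :
    HasDerivAt stdNormalCDF (gaussianPDFReal 0 1 x) x := by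
  have hφ : Integrable (gaussianPDFReal 0 1) := integrable_gaussianPDFReal 0 1
  have hshift :
      stdNormalCDF = fun y => stdNormalCDF 0 + ∫ t in (0 : ℝ)..y, gaussianPDFReal 0 1 t := by
    funext y
    rw [← intervalIntegral.integral_Iic_sub_Iic hφ.integrableOn hφ.integrableOn,
      stdNormalCDF_eq_integral, stdNormalCDF_eq_integral]
    ring
  rw [hshift]
  exact ((continuous_gaussianPDFReal 0 1).integral_hasStrictDerivAt 0 x).hasDerivAt.const_add _

@[fun_prop]
lemma continuous_stdNormalCDF : Continuous stdNormalCDF :=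
  continuous_iff_continuousAt.2 fun x => (hasDerivAt_stdNormalCDF x).continuousAt

lemma strictMono_stdNormalCDF : StrictMono stdNormalCDF :=
  strictMono_of_hasDerivAt_pos hasDerivAt_stdNormalCDF
    fun x => gaussianPDFReal_pos 0 1 x one_ne_zero

lemma stdNormalCDF_nonneg (x : ℝ) : 0 ≤ stdNormalCDF x :=
  ENNReal.toReal_nonneg

lemma stdNormalCDF_le_one (x : ℝ) : stdNormalCDF x ≤ 1 :=
  stdNormalCDF_eq_cdf ▸ cdf_le_one _ x

lemma sq_stdNormalCDF_sub_half_le (x : ℝ) : (stdNormalCDF x - 1 / 2) ^ 2 ≤ 1 / 4 := by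
  nlinarith [stdNormalCDF_nonneg x, stdNormalCDF_le_one x]

lemma stdNormalCDF_neg (x : ℝ) : stdNormalCDF (-x) = 1 - stdNormalCDF x := by
  have := nullSingletonClass_gaussianReal (μ := 0) one_ne_zero
  change (gaussianReal 0 1).real (Iic (-x)) = 1 - (gaussianReal 0 1).real (Iic x)
  rw [← probReal_compl_eq_one_sub measurableSet_Iic, compl_Iic, measureReal_congr Ioi_ae_eq_Ici]
  conv_lhs => rw [← gaussianReal_zero_map_neg]
  rw [map_measureReal_apply measurable_neg measurableSet_Iic]
  simp

lemma stdNormalCDF_zero : stdNormalCDF 0 = 1 / 2 := by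
  linarith [neg_zero (G := ℝ) ▸ stdNormalCDF_neg 0]

lemma sq_stdNormalCDF_abs_sub_half (x : ℝ) :
    (stdNormalCDF |x| - 1 / 2) ^ 2 = (stdNormalCDF x - 1 / 2) ^ 2 := by
  rcases abs_choice x with h | h
  · rw [h]
  · rw [h, stdNormalCDF_neg]
    ring

lemma sq_stdNormalCDF_sub_half_lt_of_abs_lt {x y : ℝ} (h : |x| < |y|) :
    (stdNormalCDF x - 1 / 2) ^ 2 < (stdNormalCDF y - 1 / 2) ^ 2 := by
  rw [← sq_stdNormalCDF_abs_sub_half x, ← sq_stdNormalCDF_abs_sub_half y]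
  have hx : 0 ≤ stdNormalCDF |x| - 1 / 2 := by
    rw [sub_nonneg, ← stdNormalCDF_zero]
    exact strictMono_stdNormalCDF.monotone (abs_nonneg x)
  exact pow_lt_pow_left₀ (sub_lt_sub_right (strictMono_stdNormalCDF h) _) hx two_ne_zero

lemma integral_sq_stdNormalCDF_sub_half :
    ∫ x, (stdNormalCDF x - 1 / 2) ^ 2 ∂gaussianReal 0 1 = 1 / 12 := by
  simp only [integral_gaussianReal_eq_integral_smul one_ne_zero, smul_eq_mul]
  have hderiv (x : ℝ) : HasDerivAt (fun y => (stdNormalCDF y - 1 / 2) ^ 3 / 3)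
      (gaussianPDFReal 0 1 x * (stdNormalCDF x - 1 / 2) ^ 2) x := by
    refine ((((hasDerivAt_stdNormalCDF x).sub_const (1 / 2)).fun_pow 3).div_const 3).congr_deriv ?_
    push_cast
    ring
  have hint : Integrable fun x => gaussianPDFReal 0 1 x * (stdNormalCDF x - 1 / 2) ^ 2 :=
    (integrable_gaussianPDFReal 0 1).mul_bdd (c := 1 / 4) (by fun_prop)
      (ae_of_all _ fun x => by
        rw [Real.norm_of_nonneg (sq_nonneg _)]
        exact sq_stdNormalCDF_sub_half_le x)
  have hlim {l : Filter ℝ} {c : ℝ} (h : Tendsto stdNormalCDF l (𝓝 c)) :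
      Tendsto (fun y => (stdNormalCDF y - 1 / 2) ^ 3 / 3) l (𝓝 ((c - 1 / 2) ^ 3 / 3)) :=
    ((h.sub_const _).pow 3).div_const 3
  rw [integral_of_hasDerivAt_of_tendsto hderiv hint
    (hlim (stdNormalCDF_eq_cdf ▸ tendsto_cdf_atBot _))
    (hlim (stdNormalCDF_eq_cdf ▸ tendsto_cdf_atTop _))]
  norm_num

lemma integrable_sq_stdNormalCDF_div_sub_half (σ : ℝ) :
    Integrable (fun x => (stdNormalCDF (x / σ) - 1 / 2) ^ 2) (gaussianReal 0 1) :=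
  Integrable.of_bound (by fun_prop) (1 / 4) (ae_of_all _ fun x => by
    rw [Real.norm_of_nonneg (sq_nonneg _)]
    exact sq_stdNormalCDF_sub_half_le (x / σ))

lemma strictAntiOn_integral_sq_stdNormalCDF_div_sub_half :
    StrictAntiOn (fun σ => ∫ x, (stdNormalCDF (x / σ) - 1 / 2) ^ 2 ∂gaussianReal 0 1) (Ioi 0) := by
  intro σ (hσ : 0 < σ) τ (hτ : 0 < τ) hστ
  have := nullSingletonClass_gaussianReal (μ := 0) one_ne_zero
  refine integral_lt_integral_of_ae_lt (integrable_sq_stdNormalCDF_div_sub_half τ)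
    (integrable_sq_stdNormalCDF_div_sub_half σ) ?_
  filter_upwards [Measure.ae_ne _ 0] with x hx
  apply sq_stdNormalCDF_sub_half_lt_of_abs_lt
  rw [abs_div, abs_div, abs_of_pos hσ, abs_of_pos hτ]
  exact div_lt_div_of_pos_left (abs_pos.2 hx) hσ hστ

lemma integral_stdNormalCDF_div (σ : ℝ) :
    ∫ x, stdNormalCDF (x / σ) ∂gaussianReal 0 1 = 1 / 2 := by
  refine integral_eq_half_of_map_neg (gaussianReal_zero_map_neg 1)
    (Integrable.of_bound (by fun_prop) 1 (ae_of_all _ fun x => ?_)) fun x => ?_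
  · rw [Real.norm_of_nonneg (stdNormalCDF_nonneg _)]
    exact stdNormalCDF_le_one _
  · rw [neg_div, stdNormalCDF_neg]

lemma variance_stdNormalCDF_div {Ω : Type*} [MeasurableSpace Ω] {Q : Measure Ω} {ε : Ω → ℝ}
    (hε : MeasurePreserving ε Q (gaussianReal 0 1)) (σ : ℝ) :
    variance (fun ω => stdNormalCDF (ε ω / σ)) Q
      = ∫ x, (stdNormalCDF (x / σ) - 1 / 2) ^ 2 ∂gaussianReal 0 1 := by
  have hmeas : Measurable fun x => stdNormalCDF (x / σ) := by fun_prop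
  rw [hε.variance_fun_comp hmeas.aemeasurable, variance_eq_integral hmeas.aemeasurable,
    integral_stdNormalCDF_div]

theorem gaussian_pit_dispersion_general
    {Ω : Type*} [MeasurableSpace Ω] (Q : Measure Ω)
    (ε : Ω → ℝ) (hεmeas : Measurable ε) (hεlaw : Q.map ε = gaussianReal 0 1)
    (σ : ℝ) (hσ : 0 < σ) :
    (σ < 1 → 1 / 12 < variance (fun ω => stdNormalCDF (ε ω / σ)) Q) ∧
      (σ = 1 → variance (fun ω => stdNormalCDF (ε ω / σ)) Q = 1 / 12) ∧
      (1 < σ → variance (fun ω => stdNormalCDF (ε ω / σ)) Q < 1 / 12) := by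
  have hV1 : ∫ x, (stdNormalCDF (x / 1) - 1 / 2) ^ 2 ∂gaussianReal 0 1 = 1 / 12 := by
    simpa only [div_one] using integral_sq_stdNormalCDF_sub_half
  rw [variance_stdNormalCDF_div ⟨hεmeas, hεlaw⟩, ← hV1]
  refine ⟨fun h => ?_, fun h => h ▸ rfl, fun h => ?_⟩
  · exact strictAntiOn_integral_sq_stdNormalCDF_div_sub_half hσ (mem_Ioi.2 one_pos) h
  · exact strictAntiOn_integral_sq_stdNormalCDF_div_sub_half (mem_Ioi.2 one_pos) hσ h

/-- **Example 4 of Gneiting–Ranjan.** For standard normal `ε` and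
`Z_σ = Φ(ε/σ)`: the forecast is underdispersed (`Var(Z_σ) > 1/12`) if `σ < 1`,
neutrally dispersed (`Var(Z_σ) = 1/12`) if `σ = 1`, and overdispersed
(`Var(Z_σ) < 1/12`) if `σ > 1`. -/
theorem gaussian_pit_dispersion
    {Ω : Type*} [MeasurableSpace Ω] (Q : Measure Ω) [IsProbabilityMeasure Q]
    (ε : Ω → ℝ) (hεmeas : Measurable ε) (hεlaw : Q.map ε = gaussianReal 0 1)
    (σ : ℝ) (hσ : 0 < σ) :
    (σ < 1 → 1 / 12 < variance (fun ω => stdNormalCDF (ε ω / σ)) Q) ∧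
      (σ = 1 → variance (fun ω => stdNormalCDF (ε ω / σ)) Q = 1 / 12) ∧
      (1 < σ → variance (fun ω => stdNormalCDF (ε ω / σ)) Q < 1 / 12) :=
  gaussian_pit_dispersion_general Q ε hεmeas hεlaw σ hσ
end

section
/- Let k ≥ 1 and let F₀, F₁, …, F_k be cumulative distribution functions on ℝ that admit Lebesgue densities and are strictly increasing on ℝ. Let μ_i denote the unique median of F_i for i = 1, …, k, and assume μ₁ ≤ μ₂ ≤ ⋯ ≤ μ_k. Let Y be a random variable with law F₀, and fix nonnegative weights w₁, …, w_k summing to 1. For c > 0 define the spread-adjusted linear pool G_c(y) = Σ_{i=1}^k w_i·F_i(μ_i + (y − μ_i)/c) and its probability integral transform Z_c = G_c(Y). Set v₀ = 0, v_i = w₁ + ⋯ + w_i for i = 1, …, k−1, v_k = 1, and p₀ = F₀(μ₁), p_i = F₀(μ_{i+1}) − F₀(μ_i) for i = 1, …, k−1, p_k = 1 − F₀(μ_k), and define s₀ = Σ_{i=0}^k p_i·(v_i − Σ_{j=0}^k p_j·v_j)². Then for every t ∈ (0, s₀) there exists c > 0 such that Var(Z_c) = t. -/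
/-!
`Var(Z_c)` is the variance of `G_c` under the law `F₀` of `Y`. Since `G_c` is bounded uniformly
in `c`, dominated convergence makes this variance continuous in `c > 0` and lets us pass to
pointwise limits. As `c → ∞` every component is evaluated at its median, so `G_c → 1/2` and the variance
tends to `0`. As `c → 0⁺`, off the medians (an `F₀`-null set) `G_c(y)` tends to `v_i`, where `i`
is the number of medians below `y`; this index has law `(p_0, …, p_k)` under `F₀`, so the
variance tends to `s₀`. The intermediate value theorem on `(0, ∞)` concludes.
-/

open MeasureTheory ProbabilityTheory

/-- The cumulative distribution function of a Borel measure on `ℝ`. -/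
noncomputable def cdfOf (μ : Measure ℝ) : ℝ → ℝ :=
  fun y => (μ (Set.Iic y)).toReal

/-- `slpV w i = v_i = w₁ + ⋯ + w_i` (with `w` indexed from `0`), so `v_0 = 0`. -/
noncomputable def slpV (w : ℕ → ℝ) (i : ℕ) : ℝ :=
  ∑ j ∈ Finset.range i, w j

/-- `slpP F0 med k i = p_i`: with medians `μ₁ ≤ ⋯ ≤ μ_k` (here `med 0, …, med (k-1)`),
`p_0 = F₀(μ₁)`, `p_i = F₀(μ_{i+1}) − F₀(μ_i)` for `1 ≤ i ≤ k−1`, and `p_k = 1 − F₀(μ_k)`. -/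
noncomputable def slpP (F0 : ℝ → ℝ) (med : ℕ → ℝ) (k i : ℕ) : ℝ :=
  if i = 0 then F0 (med 0)
  else if i = k then 1 - F0 (med (k - 1))
  else F0 (med i) - F0 (med (i - 1))

/-- `slpS0 = s₀ = Σ_{i=0}^k p_i (v_i − Σ_{j=0}^k p_j v_j)²`. -/
noncomputable def slpS0 (F0 : ℝ → ℝ) (med : ℕ → ℝ) (w : ℕ → ℝ) (k : ℕ) : ℝ :=
  ∑ i ∈ Finset.range (k + 1),
    slpP F0 med k i * (slpV w i - ∑ j ∈ Finset.range (k + 1), slpP F0 med k j * slpV w j) ^ 2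

open Filter Set Topology

lemma MeasureTheory.Measure.AbsolutelyContinuous.nullSingletonClass {α : Type*}
    [MeasurableSpace α] {μ ν : Measure α} [NullSingletonClass ν] (h : μ ≪ ν) :
    NullSingletonClass μ :=
  ⟨fun x => h (measure_singleton x)⟩

lemma cdfOf_eq_cdf (μ : Measure ℝ) [IsProbabilityMeasure μ] : cdfOf μ = cdf μ := by
  funext x; rw [cdf_eq_real]; rfl

lemma continuous_cdf (μ : Measure ℝ) [IsProbabilityMeasure μ] [NullSingletonClass μ] :
    Continuous (cdf μ) := by
  refine continuous_iff_continuousAt.mpr fun x => ?_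
  rw [(cdf μ).mono.continuousAt_iff_leftLim_eq_rightLim, (cdf μ).rightLim_eq]
  have hjump : ENNReal.ofReal (cdf μ x - Function.leftLim (cdf μ) x) = 0 := by
    rw [← StieltjesFunction.measure_singleton, measure_cdf, measure_singleton]
  linarith [ENNReal.ofReal_eq_zero.mp hjump, (cdf μ).mono.leftLim_le (le_refl x)]

structure IsContinuousCDF (f : ℝ → ℝ) : Prop where
  continuous : Continuous f
  mem_Icc : ∀ x, f x ∈ Icc 0 1
  tendsto_atBot : Tendsto f atBot (𝓝 0)
  tendsto_atTop : Tendsto f atTop (𝓝 1)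

lemma isContinuousCDF_cdf (μ : Measure ℝ) [IsProbabilityMeasure μ] [NullSingletonClass μ] :
    IsContinuousCDF (cdf μ) :=
  ⟨continuous_cdf μ, fun x => ⟨cdf_nonneg μ x, cdf_le_one μ x⟩, tendsto_cdf_atBot μ,
    tendsto_cdf_atTop μ⟩

lemma IsContinuousCDF.abs_le_one {f : ℝ → ℝ} (hf : IsContinuousCDF f) (x : ℝ) : |f x| ≤ 1 :=
  abs_le.mpr ⟨by linarith [(hf.mem_Icc x).1], (hf.mem_Icc x).2⟩

lemma tendsto_add_div_nhdsGT_zero_atTop {m y : ℝ} (h : m < y) :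
    Tendsto (fun c : ℝ => m + (y - m) / c) (𝓝[>] 0) atTop :=
  tendsto_atTop_add_const_left _ _ <|
    (tendsto_const_mul_atTop_of_pos (sub_pos.mpr h)).mpr tendsto_inv_nhdsGT_zero

lemma tendsto_add_div_nhdsGT_zero_atBot {m y : ℝ} (h : y < m) :
    Tendsto (fun c : ℝ => m + (y - m) / c) (𝓝[>] 0) atBot :=
  tendsto_atBot_add_const_left _ _ <|
    (tendsto_const_mul_atBot_of_neg (sub_neg.mpr h)).mpr tendsto_inv_nhdsGT_zero

lemma tendsto_add_div_atTop (m y : ℝ) :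
    Tendsto (fun c : ℝ => m + (y - m) / c) atTop (𝓝 m) := by
  simpa using (tendsto_const_nhds (x := y - m)).div_atTop tendsto_id |>.const_add m

lemma Finset.filter_range_eq_range_card {k : ℕ} {p : ℕ → Prop} [DecidablePred p]
    (hp : ∀ i j, i ≤ j → j < k → p j → p i) :
    (Finset.range k).filter p = Finset.range ((Finset.range k).filter p).card := by
  refine Finset.eq_of_subset_of_card_le (fun j hj => ?_) (by simp)
  have hsub : Finset.range (j + 1) ⊆ (Finset.range k).filter p := fun i hi => by
    simp only [Finset.mem_filter, Finset.mem_range] at hj hi ⊢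
    exact ⟨by omega, hp i j (by omega) hj.1 hj.2⟩
  simpa [Nat.succ_le_iff] using Finset.card_le_card hsub

lemma integral_comp_eq_sum_measureReal {α : Type*} [MeasurableSpace α] {μ : Measure α}
    [IsFiniteMeasure μ] {f : α → ℕ} (hf : Measurable f) {n : ℕ} (hfn : ∀ x, f x < n)
    (φ : ℕ → ℝ) : ∫ x, φ (f x) ∂μ = ∑ i ∈ Finset.range n, μ.real {x | f x = i} * φ i := by
  have hmeas : ∀ i, MeasurableSet {x | f x = i} := fun i => hf (measurableSet_singleton i)
  have hdecomp : (fun x => φ (f x)) =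
      fun x => ∑ i ∈ Finset.range n, {x | f x = i}.indicator (fun _ => φ i) x := by
    funext x
    rw [Finset.sum_eq_single_of_mem (f x) (Finset.mem_range.mpr (hfn x))]
    · simp
    · exact fun i _ hi => indicator_of_notMem (fun h : f x = i => hi h.symm) _
  rw [hdecomp, integral_finsetSum _ fun i _ => (integrable_const _).indicator (hmeas i)]
  simp [integral_indicator_const _ (hmeas _)]

lemma tendsto_variance_of_norm_le {α ι : Type*} [MeasurableSpace α] {μ : Measure α}
    [IsProbabilityMeasure μ] {l : Filter ι} [l.IsCountablyGenerated] [l.NeBot]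
    {f : ι → α → ℝ} {g : α → ℝ} {C : ℝ} (hf : ∀ i, AEStronglyMeasurable (f i) μ)
    (hC : ∀ i x, ‖f i x‖ ≤ C) (hlim : ∀ᵐ x ∂μ, Tendsto (fun i => f i x) l (𝓝 (g x))) :
    Tendsto (fun i => variance (f i) μ) l (𝓝 (variance g μ)) := by
  have hg : AEStronglyMeasurable g μ := aestronglyMeasurable_of_tendsto_ae l hf hlim
  have hgC : ∀ᵐ x ∂μ, ‖g x‖ ≤ C := hlim.mono fun x hx =>
    le_of_tendsto hx.norm (Eventually.of_forall fun i => hC i x)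
  have hC2 : ∀ i x, ‖(f i ^ 2) x‖ ≤ C ^ 2 := fun i x => by
    simpa [norm_pow] using pow_le_pow_left₀ (norm_nonneg _) (hC i x) 2
  have hmean : Tendsto (fun i => ∫ x, f i x ∂μ) l (𝓝 (∫ x, g x ∂μ)) :=
    tendsto_integral_filter_of_dominated_convergence (fun _ => C) (.of_forall hf)
      (.of_forall fun i => ae_of_all _ (hC i)) (integrable_const C) hlim
  have hsecond : Tendsto (fun i => ∫ x, (f i ^ 2) x ∂μ) l (𝓝 (∫ x, (g ^ 2) x ∂μ)) :=
    tendsto_integral_filter_of_dominated_convergence (fun _ => C ^ 2)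
      (.of_forall fun i => (hf i).pow 2) (.of_forall fun i => ae_of_all _ (hC2 i))
      (integrable_const _) (hlim.mono fun x hx => hx.pow 2)
  rw [variance_eq_sub (MemLp.of_bound hg C hgC)]
  simpa only [variance_eq_sub (MemLp.of_bound (hf _) C (ae_of_all _ (hC _)))] using
    hsecond.sub (hmean.pow 2)

noncomputable def slpPool (k : ℕ) (w : ℕ → ℝ) (F : ℕ → ℝ → ℝ) (med : ℕ → ℝ) (c y : ℝ) : ℝ :=
  ∑ i ∈ Finset.range k, w i * F i (med i + (y - med i) / c)

section Pool

variable {k : ℕ} {w med : ℕ → ℝ} {F : ℕ → ℝ → ℝ}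

lemma norm_slpPool_le (hF : ∀ i < k, IsContinuousCDF (F i)) (c y : ℝ) :
    ‖slpPool k w F med c y‖ ≤ ∑ i ∈ Finset.range k, |w i| := by
  rw [Real.norm_eq_abs]
  refine (Finset.abs_sum_le_sum_abs _ _).trans (Finset.sum_le_sum fun i hi => ?_)
  rw [abs_mul]
  exact mul_le_of_le_one_right (abs_nonneg _) ((hF i (Finset.mem_range.mp hi)).abs_le_one _)

lemma continuous_slpPool (hF : ∀ i < k, IsContinuousCDF (F i)) (c : ℝ) :
    Continuous (slpPool k w F med c) :=
  continuous_finsetSum _ fun i hi => continuous_const.mul <|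
    (hF i (Finset.mem_range.mp hi)).continuous.comp (by fun_prop)

lemma continuousAt_slpPool_scale (hF : ∀ i < k, IsContinuousCDF (F i)) (y : ℝ) {c : ℝ}
    (hc : c ≠ 0) : ContinuousAt (fun c => slpPool k w F med c y) c :=
  tendsto_finsetSum _ fun i hi => continuousAt_const.mul <|
    (hF i (Finset.mem_range.mp hi)).continuous.continuousAt.comp (by fun_prop (disch := exact hc))

lemma tendsto_slpPool_atTop (hF : ∀ i < k, IsContinuousCDF (F i))
    (hmed : ∀ i < k, F i (med i) = 1 / 2) (hw1 : ∑ i ∈ Finset.range k, w i = 1) (y : ℝ) :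
    Tendsto (fun c => slpPool k w F med c y) atTop (𝓝 (1 / 2)) := by
  have hterm : ∀ i ∈ Finset.range k, Tendsto (fun c => w i * F i (med i + (y - med i) / c))
      atTop (𝓝 (w i * (1 / 2))) := fun i hi => by
    rw [← hmed i (Finset.mem_range.mp hi)]
    exact ((hF i (Finset.mem_range.mp hi)).continuous.tendsto _).comp
      (tendsto_add_div_atTop _ _) |>.const_mul _
  simpa [slpPool, ← Finset.sum_mul, hw1] using tendsto_finsetSum _ hterm

lemma tendsto_slpPool_nhdsGT_zero (hF : ∀ i < k, IsContinuousCDF (F i)) {y : ℝ}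
    (hy : ∀ i < k, y ≠ med i) :
    Tendsto (fun c => slpPool k w F med c y) (𝓝[>] 0)
      (𝓝 (∑ i ∈ (Finset.range k).filter (fun i => med i < y), w i)) := by
  rw [Finset.sum_filter]
  refine tendsto_finsetSum _ fun i hi => ?_
  have hFi := hF i (Finset.mem_range.mp hi)
  rcases (hy i (Finset.mem_range.mp hi)).lt_or_gt with hlt | hgt
  · simpa [hlt.not_gt] using
      (hFi.tendsto_atBot.comp (tendsto_add_div_nhdsGT_zero_atBot hlt)).const_mul (w i)
  · simpa [hgt] using
      (hFi.tendsto_atTop.comp (tendsto_add_div_nhdsGT_zero_atTop hgt)).const_mul (w i)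

end Pool

/-- For sorted medians, `{y | slpIndex k med y = i}` is the `i`-th gap between them, whose
`F₀`-mass is `p_i`. -/
noncomputable def slpIndex (k : ℕ) (med : ℕ → ℝ) (y : ℝ) : ℕ :=
  ((Finset.range k).filter (fun j => med j < y)).card

section Index

variable {k : ℕ} {w med : ℕ → ℝ}

lemma slpIndex_le (y : ℝ) : slpIndex k med y ≤ k :=
  (Finset.card_filter_le _ _).trans (Finset.card_range k).le

lemma monotone_slpIndex : Monotone (slpIndex k med) := fun _ _ hyy' =>
  Finset.card_le_card <| Finset.monotone_filter_right _ fun _ _ hj => hj.trans_le hyy'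

lemma measurable_slpIndex : Measurable (slpIndex k med) :=
  monotone_slpIndex.measurable

variable (hmono : ∀ i j, i ≤ j → j < k → med i ≤ med j)
include hmono

lemma filter_med_lt_eq_range_slpIndex (y : ℝ) :
    (Finset.range k).filter (fun j => med j < y) = Finset.range (slpIndex k med y) :=
  Finset.filter_range_eq_range_card fun i j hij hj h => (hmono i j hij hj).trans_lt h

lemma succ_le_slpIndex_iff {i : ℕ} (hi : i < k) (y : ℝ) :
    i + 1 ≤ slpIndex k med y ↔ med i < y := by
  rw [Nat.succ_le_iff, ← Finset.mem_range, ← filter_med_lt_eq_range_slpIndex hmono]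
  simp [hi]

lemma measureReal_slpIndex_eq (μ : Measure ℝ) [IsProbabilityMeasure μ] (hk : k ≠ 0) {i : ℕ}
    (hi : i ≤ k) : μ.real {y | slpIndex k med y = i} = slpP (cdf μ) med k i := by
  have hN : ∀ j < k, ∀ y, j + 1 ≤ slpIndex k med y ↔ med j < y :=
    fun j hj => succ_le_slpIndex_iff hmono hj
  have hle := slpIndex_le (k := k) (med := med)
  rcases Nat.eq_zero_or_pos i with rfl | hi0
  · have hset : {y | slpIndex k med y = 0} = Iic (med 0) := by
      ext y
      rw [mem_ofPred_eq, mem_Iic, ← not_lt, ← hN 0 (Nat.pos_of_ne_zero hk) y]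
      omega
    simp [hset, slpP, cdf_eq_real]
  rcases hi.eq_or_lt with hik | hik
  · subst i
    have hset : {y | slpIndex k med y = k} = Ioi (med (k - 1)) := by
      ext y
      rw [mem_ofPred_eq, mem_Ioi, ← hN (k - 1) (by omega) y]
      have := hle y
      omega
    rw [hset, ← compl_Iic, probReal_compl_eq_one_sub measurableSet_Iic, ← cdf_eq_real]
    simp [slpP, hk]
  · have hset : {y | slpIndex k med y = i} = Ioc (med (i - 1)) (med i) := by
      ext y
      rw [mem_ofPred_eq, mem_Ioc, ← not_lt, ← hN i hik y, ← hN (i - 1) (by omega) y]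
      omega
    rw [hset, ← Iic_sdiff_Iic, measureReal_sdiff (Iic_subset_Iic.mpr (hmono _ _ (by omega) hik))
      measurableSet_Iic, ← cdf_eq_real, ← cdf_eq_real]
    simp [slpP, hi0.ne', hik.ne]

lemma variance_slpV_comp_slpIndex (μ : Measure ℝ) [IsProbabilityMeasure μ] (hk : k ≠ 0) :
    variance (fun y => slpV w (slpIndex k med y)) μ = slpS0 (cdf μ) med w k := by
  have hint : ∀ φ : ℕ → ℝ, ∫ y, φ (slpIndex k med y) ∂μ =
      ∑ i ∈ Finset.range (k + 1), slpP (cdf μ) med k i * φ i := fun φ => by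
    rw [integral_comp_eq_sum_measureReal measurable_slpIndex
      fun y => Nat.lt_succ_of_le (slpIndex_le y)]
    refine Finset.sum_congr rfl fun i hi => ?_
    rw [measureReal_slpIndex_eq hmono μ hk (Nat.lt_succ_iff.mp (Finset.mem_range.mp hi))]
  have hX : Measurable fun y => slpV w (slpIndex k med y) :=
    (measurable_from_nat (f := slpV w)).comp (measurable_slpIndex (k := k) (med := med))
  rw [variance_eq_integral hX.aemeasurable, hint (slpV w)]
  exact hint fun i => (slpV w i - _) ^ 2

end Index

section PoolVariance

variable {k : ℕ} {w med : ℕ → ℝ} {F : ℕ → ℝ → ℝ} (μ : Measure ℝ) [IsProbabilityMeasure μ]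
  (hF : ∀ i < k, IsContinuousCDF (F i))
include hF

lemma continuousOn_variance_slpPool :
    ContinuousOn (fun c => variance (slpPool k w F med c) μ) (Ioi 0) := fun _ hc =>
  ContinuousAt.continuousWithinAt <| tendsto_variance_of_norm_le
    (fun c => (continuous_slpPool hF c).aestronglyMeasurable) (norm_slpPool_le hF)
    (ae_of_all _ fun y => continuousAt_slpPool_scale hF y (ne_of_gt hc))

lemma tendsto_variance_slpPool_atTop (hmed : ∀ i < k, F i (med i) = 1 / 2)
    (hw1 : ∑ i ∈ Finset.range k, w i = 1) :
    Tendsto (fun c => variance (slpPool k w F med c) μ) atTop (𝓝 0) := by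
  simpa [variance_eq_integral aemeasurable_const] using
    tendsto_variance_of_norm_le (g := fun _ => 1 / 2)
      (fun c => (continuous_slpPool hF c).aestronglyMeasurable) (norm_slpPool_le hF)
      (ae_of_all μ (tendsto_slpPool_atTop hF hmed hw1))

lemma tendsto_variance_slpPool_nhdsGT_zero [NullSingletonClass μ]
    (hmono : ∀ i j, i ≤ j → j < k → med i ≤ med j) (hk : k ≠ 0) :
    Tendsto (fun c => variance (slpPool k w F med c) μ) (𝓝[>] 0)
      (𝓝 (slpS0 (cdf μ) med w k)) := by
  rw [← variance_slpV_comp_slpIndex hmono μ hk]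
  refine tendsto_variance_of_norm_le (fun c => (continuous_slpPool hF c).aestronglyMeasurable)
    (norm_slpPool_le hF) ?_
  have hoff : ∀ᵐ y ∂μ, y ∉ med '' Iio k := ((finite_Iio k).image med).countable.ae_notMem μ
  filter_upwards [hoff] with y hy
  rw [slpV, ← filter_med_lt_eq_range_slpIndex hmono]
  exact tendsto_slpPool_nhdsGT_zero hF fun i hi h => hy ⟨i, hi, h.symm⟩

end PoolVariance

theorem slp_variance_attains_values_general
    {Ω : Type*} [MeasurableSpace Ω] (Q : Measure Ω)
    (k : ℕ)
    (μ0 : Measure ℝ) [IsProbabilityMeasure μ0] (hac0 : μ0 ≪ volume)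
    (F0 : ℝ → ℝ) (hF0 : F0 = cdfOf μ0)
    (μc : ℕ → Measure ℝ) (hprob : ∀ i < k, IsProbabilityMeasure (μc i))
    (hac : ∀ i < k, μc i ≪ volume)
    (F : ℕ → ℝ → ℝ) (hF : ∀ i < k, F i = cdfOf (μc i))
    (med : ℕ → ℝ) (hmed : ∀ i < k, F i (med i) = 1 / 2)
    (hmedmono : ∀ i j, i ≤ j → j < k → med i ≤ med j)
    (w : ℕ → ℝ) (hw1 : ∑ i ∈ Finset.range k, w i = 1)
    (Y : Ω → ℝ) (hYlaw : Q.map Y = μ0) :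
    ∀ t : ℝ, 0 < t → t < slpS0 F0 med w k →
      ∃ c : ℝ, 0 < c ∧
        variance (fun ω => ∑ i ∈ Finset.range k, w i * F i (med i + (Y ω - med i) / c)) Q
          = t := by
  intro t ht hts
  have hk : k ≠ 0 := by rintro rfl; simp at hw1
  have := hac0.nullSingletonClass
  have hcdf : ∀ i < k, IsContinuousCDF (F i) := fun i hi => by
    have := hprob i hi
    have := (hac i hi).nullSingletonClass
    rw [hF i hi, cdfOf_eq_cdf]
    exact isContinuousCDF_cdf _
  rw [hF0, cdfOf_eq_cdf] at hts
  obtain ⟨c, hc, hct⟩ := isPreconnected_Ioi.intermediate_value_Ioo (l₂ := 𝓝[>] 0)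
    (le_principal_iff.mpr (Ioi_mem_atTop 0)) inf_le_right (continuousOn_variance_slpPool μ0 hcdf)
    (tendsto_variance_slpPool_atTop μ0 hcdf hmed hw1)
    (tendsto_variance_slpPool_nhdsGT_zero μ0 hcdf hmedmono hk) ⟨ht, hts⟩
  have hY : AEMeasurable Y Q := .of_map_ne_zero (hYlaw ▸ IsProbabilityMeasure.ne_zero μ0)
  refine ⟨c, hc, ?_⟩
  rw [← hct, ← hYlaw]
  exact (variance_map (X := slpPool k w F med c) (continuous_slpPool hcdf c).aemeasurable hY).symm

/-- **Proposition 8 of Gneiting–Ranjan.** For the spread-adjusted linear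
pool `G_c(y) = Σᵢ wᵢ Fᵢ(μᵢ + (y − μᵢ)/c)` of strictly increasing cumulative distribution
functions `F₁, …, F_k` admitting Lebesgue densities, with medians `μ₁ ≤ ⋯ ≤ μ_k`, an
observation `Y ~ F₀`, and PIT `Z_c = G_c(Y)`: as `c > 0` varies, `Var(Z_c)` attains every
value in `(0, s₀)`. (Components are indexed by `0, …, k−1` here.) -/
theorem slp_variance_attains_values
    {Ω : Type*} [MeasurableSpace Ω] (Q : Measure Ω) [IsProbabilityMeasure Q]
    (k : ℕ) (hk : 1 ≤ k)
    (μ0 : Measure ℝ) [IsProbabilityMeasure μ0] (hac0 : μ0 ≪ volume)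
    (F0 : ℝ → ℝ) (hF0 : F0 = cdfOf μ0) (hF0mono : StrictMono F0)
    (μc : ℕ → Measure ℝ) (hprob : ∀ i < k, IsProbabilityMeasure (μc i))
    (hac : ∀ i < k, μc i ≪ volume)
    (F : ℕ → ℝ → ℝ) (hF : ∀ i < k, F i = cdfOf (μc i))
    (hFmono : ∀ i < k, StrictMono (F i))
    (med : ℕ → ℝ) (hmed : ∀ i < k, F i (med i) = 1 / 2)
    (hmedmono : ∀ i j, i ≤ j → j < k → med i ≤ med j)
    (w : ℕ → ℝ) (hw : ∀ i < k, 0 ≤ w i) (hw1 : ∑ i ∈ Finset.range k, w i = 1)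
    (Y : Ω → ℝ) (hYmeas : Measurable Y) (hYlaw : Q.map Y = μ0) :
    ∀ t : ℝ, 0 < t → t < slpS0 F0 med w k →
      ∃ c : ℝ, 0 < c ∧
        variance (fun ω => ∑ i ∈ Finset.range k, w i * F i (med i + (Y ω - med i) / c)) Q
          = t :=
  slp_variance_attains_values_general Q k μ0 hac0 F0 hF0 μc hprob hac F hF med hmed hmedmono w hw1 Y
    hYlaw
end
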